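/- arXiv:2004.03885 — 4 statements merged into one kernel-verified Lean document; each statement's English description precedes it below -/
import Mathlib

section
/- Let d ≥ 3, m ≥ 1, ω ∈ Ω_{d,m}, ξ, η ∈ X^ℕ, and let φ : (Γ_ξ, ξ) → (Γ_η, η) be an isomorphism of rooted, undirected, unlabeled graphs. Then for every n ≥ 0, ξ_n = 0 if and only if η_n = 0. -/
open MeasureTheory

noncomputable section

/-- The boundary of the `d`-regular rooted tree: infinite words over `X = {0,…,d-1}`,
identified with `ZMod d`. -/
abbrev Bd (d : ℕ) : Type := ℕ → ZMod d
/-- The rooted automorphism `a`: adds 1 (mod `d`) to the first letter. -/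
def aMap (d : ℕ) (ξ : Bd d) : Bd d := fun n => if n = 0 then ξ 0 + 1 else ξ n

open scoped Classical in
/-- The spinal automorphism `b_ω`: if `ξ` starts with `(d-1)^r 0`, add `ω r b` to the
letter at position `r + 1`; otherwise fix `ξ`. -/
def bMap (d m : ℕ) (ω : ℕ → ((Fin m → ZMod d) →+ ZMod d)) (b : Fin m → ZMod d)
    (ξ : Bd d) : Bd d := fun n =>
  if n ≠ 0 ∧ (∀ i, i < n - 1 → ξ i = (d : ZMod d) - 1) ∧ ξ (n - 1) = 0 then
    ξ n + ω (n - 1) b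
  else ξ n
/-- The spinal generating set `S = {a^j : 1 ≤ j ≤ d-1} ∪ {b_ω : b ∈ B ∖ {0}}`,
as a set of self-maps of the boundary. -/
def genSet (d m : ℕ) (ω : ℕ → ((Fin m → ZMod d) →+ ZMod d)) : Set (Bd d → Bd d) :=
  {f | ∃ j, 1 ≤ j ∧ j ≤ d - 1 ∧ f = (aMap d)^[j]} ∪ {f | ∃ b, b ≠ 0 ∧ f = bMap d m ω b}
/-- Membership in `Ω_{d,m}`: all `ω_n` are surjective and `⋂_{j ≥ i} ker ω_j = {0}`
for every `i ≥ 0`. -/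
def InOmega (d m : ℕ) (ω : ℕ → ((Fin m → ZMod d) →+ ZMod d)) : Prop :=
  (∀ n, Function.Surjective (ω n)) ∧
  ∀ i : ℕ, ∀ b : Fin m → ZMod d, (∀ j, i ≤ j → ω j b = 0) → b = 0
/-- Two boundary points are cofinal if they agree at all sufficiently large positions. -/
def Cofinal {d : ℕ} (ξ η : Bd d) : Prop := ∃ N, ∀ n, N ≤ n → ξ n = η n

/-- The cofinality class of `ξ`. -/
def Cof {d : ℕ} (ξ : Bd d) : Set (Bd d) := {η | Cofinal ξ η}

theorem self_mem_Cof {d : ℕ} (ξ : Bd d) : ξ ∈ Cof ξ := ⟨0, fun _ _ => rfl⟩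
/-- Edge multiplicity in the Schreier graph `Γ_ξ`:
`mult(u, v) = card {s ∈ S : s · u = v}`. -/
def mult (d m : ℕ) (ω : ℕ → ((Fin m → ZMod d) →+ ZMod d)) (u v : Bd d) : ℕ :=
  Nat.card {f : Bd d → Bd d // f ∈ genSet d m ω ∧ f u = v}
/-- `φ` is an isomorphism of rooted, undirected, unlabeled graphs `(Γ_ξ, ξ) → (Γ_η, η)`:
a bijection `Cof(ξ) → Cof(η)` sending `ξ` to `η` and preserving edge multiplicities. -/
def IsRootedIso (d m : ℕ) (ω : ℕ → ((Fin m → ZMod d) →+ ZMod d)) (ξ η : Bd d)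
    (φ : ↥(Cof ξ) ≃ ↥(Cof η)) : Prop :=
  φ ⟨ξ, self_mem_Cof ξ⟩ = ⟨η, self_mem_Cof η⟩ ∧
  ∀ u v : ↥(Cof ξ), mult d m ω ↑u ↑v = mult d m ω ↑(φ u) ↑(φ v)

namespace SpinalZeros

variable {d m : ℕ} {ω : ℕ → ((Fin m → ZMod d) →+ ZMod d)}

/-- `u` is active at level `r`: prefix `(d-1)^r 0`. -/
def IsLev (d : ℕ) (r : ℕ) (u : Bd d) : Prop :=
  (∀ i, i < r → u i = (d : ZMod d) - 1) ∧ u r = 0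

lemma dm1_ne_zero (hd : 3 ≤ d) : ((d : ZMod d) - 1 : ZMod d) ≠ 0 := by
  haveI : Fact (1 < d) := ⟨by omega⟩
  rw [ZMod.natCast_self, zero_sub]
  exact neg_ne_zero.mpr one_ne_zero

lemma one_ne_zero' (hd : 3 ≤ d) : (1 : ZMod d) ≠ 0 := by
  haveI : Fact (1 < d) := ⟨by omega⟩
  exact one_ne_zero

lemma one_ne_dm1 (hd : 3 ≤ d) : (1 : ZMod d) ≠ (d : ZMod d) - 1 := by
  haveI : NeZero d := ⟨by omega⟩
  rw [ZMod.natCast_self, zero_sub]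
  intro h
  have h2 : ((2 : ℕ) : ZMod d) = 0 := by push_cast; linear_combination h
  rw [ZMod.natCast_eq_zero_iff] at h2
  have := Nat.le_of_dvd (by norm_num) h2
  omega

lemma lev_unique (hd : 3 ≤ d) {u : Bd d} {r r' : ℕ}
    (h : IsLev d r u) (h' : IsLev d r' u) : r = r' := by
  by_contra hne
  rcases Nat.lt_or_ge r r' with hlt | hge
  · exact dm1_ne_zero hd ((h'.1 r hlt).symm.trans h.2)
  · have hlt : r' < r := by omega
    exact dm1_ne_zero hd ((h.1 r' hlt).symm.trans h'.2)

lemma aMap_iterate (u : Bd d) : ∀ j : ℕ,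
    (aMap d)^[j] u = Function.update u 0 (u 0 + (j : ZMod d))
  | 0 => by simp [Function.update_eq_self]
  | (j+1) => by
      rw [Function.iterate_succ_apply', aMap_iterate u j]
      funext k
      rcases eq_or_ne k 0 with rfl | hk
      · simp only [aMap, if_pos rfl, Function.update_self]
        push_cast; ring
      · simp only [aMap, if_neg hk, Function.update_of_ne hk]

lemma bMap_eq_update (hd : 3 ≤ d) {u : Bd d} {r : ℕ} (h : IsLev d r u)
    (b : Fin m → ZMod d) :
    bMap d m ω b u = Function.update u (r+1) (u (r+1) + ω r b) := by
  funext k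
  by_cases hk : k = r + 1
  · subst hk
    rw [Function.update_self]
    show (if _ ∧ _ ∧ _ then _ else _) = _
    rw [if_pos]
    · simp
    · refine ⟨by omega, ?_, ?_⟩
      · intro i hi
        exact h.1 i (by omega)
      · simpa using h.2
  · rw [Function.update_of_ne hk]
    show (if _ ∧ _ ∧ _ then _ else _) = _
    rw [if_neg]
    rintro ⟨hk0, hpre, h0⟩
    have hlev : IsLev d (k-1) u := ⟨fun i hi => hpre i hi, h0⟩
    have := lev_unique hd hlev h
    omega

lemma bMap_eq_self {u : Bd d} (h : ¬ ∃ r, IsLev d r u) (b : Fin m → ZMod d) :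
    bMap d m ω b u = u := by
  funext k
  show (if _ ∧ _ ∧ _ then _ else _) = _
  rw [if_neg]
  rintro ⟨hk0, hpre, h0⟩
  exact h ⟨k - 1, fun i hi => hpre i hi, h0⟩

lemma gen_cases (hd : 3 ≤ d) {f : Bd d → Bd d} (hf : f ∈ genSet d m ω) (u : Bd d) :
    f u = u ∨ (∃ c : ZMod d, c ≠ 0 ∧ f u = Function.update u 0 (u 0 + c)) ∨
      (∃ r : ℕ, ∃ c : ZMod d, IsLev d r u ∧ c ≠ 0 ∧
        f u = Function.update u (r+1) (u (r+1) + c)) := by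
  rcases hf with ⟨j, hj1, hjd, rfl⟩ | ⟨b, hb, rfl⟩
  · by_cases hc : ((j : ℕ) : ZMod d) = 0
    · left
      rw [aMap_iterate, hc, add_zero, Function.update_eq_self]
    · exact Or.inr (Or.inl ⟨(j : ZMod d), hc, aMap_iterate u j⟩)
  · by_cases hact : ∃ r, IsLev d r u
    · obtain ⟨r, hr⟩ := hact
      have hb' := bMap_eq_update (ω := ω) hd hr b
      by_cases hc : ω r b = 0
      · left
        rw [hb', hc, add_zero, Function.update_eq_self]
      · exact Or.inr (Or.inr ⟨r, ω r b, hr, hc, hb'⟩)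
    · left; exact bMap_eq_self hact b

lemma a_edge_exists (hd : 3 ≤ d) (ω : ℕ → ((Fin m → ZMod d) →+ ZMod d))
    (u : Bd d) {c : ZMod d} (hc : c ≠ 0) :
    ∃ f ∈ genSet d m ω, f u = Function.update u 0 (u 0 + c) := by
  haveI : NeZero d := ⟨by omega⟩
  refine ⟨(aMap d)^[c.val], Or.inl ⟨c.val, ?_, ?_, rfl⟩, ?_⟩
  · have : c.val ≠ 0 := fun h => hc ((ZMod.val_eq_zero c).mp h)
    omega
  · have := ZMod.val_lt c
    omega
  · rw [aMap_iterate, ZMod.natCast_rightInverse c]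

lemma b_edge_exists (hd : 3 ≤ d) (hω : InOmega d m ω) {u : Bd d} {r : ℕ}
    (hlev : IsLev d r u) {γ : ZMod d} (hγ : γ ≠ 0) :
    ∃ f ∈ genSet d m ω, f u = Function.update u (r+1) (u (r+1) + γ) := by
  obtain ⟨b, hb⟩ := hω.1 r γ
  have hb0 : b ≠ 0 := fun h => hγ (by rw [← hb, h, map_zero])
  exact ⟨bMap d m ω b, Or.inr ⟨b, hb0, rfl⟩, by rw [bMap_eq_update hd hlev, hb]⟩

lemma genSet_finite (hd : 3 ≤ d) (ω : ℕ → ((Fin m → ZMod d) →+ ZMod d)) :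
    (genSet d m ω).Finite := by
  haveI : NeZero d := ⟨by omega⟩
  apply Set.Finite.union
  · apply Set.Finite.subset ((Set.finite_Icc 1 (d-1)).image (fun j => (aMap d)^[j]))
    rintro f ⟨j, h1, h2, rfl⟩
    exact ⟨j, ⟨h1, h2⟩, rfl⟩
  · apply Set.Finite.subset (Set.finite_univ.image (bMap d m ω))
    rintro f ⟨b, _, rfl⟩
    exact ⟨b, trivial, rfl⟩

lemma mult_ne_zero_iff (hd : 3 ≤ d) (ω : ℕ → ((Fin m → ZMod d) →+ ZMod d))
    (u v : Bd d) :
    mult d m ω u v ≠ 0 ↔ ∃ f ∈ genSet d m ω, f u = v := by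
  have hfin : {f : Bd d → Bd d | f ∈ genSet d m ω ∧ f u = v}.Finite :=
    (genSet_finite hd ω).subset fun f hf => hf.1
  rw [mult, Nat.card_ne_zero]
  constructor
  · rintro ⟨⟨⟨f, hf, hfu⟩⟩, -⟩
    exact ⟨f, hf, hfu⟩
  · rintro ⟨f, hf, hfu⟩
    exact ⟨⟨⟨f, hf, hfu⟩⟩, hfin.to_subtype⟩

lemma mem_cof_of_agree {ξ x : Bd d} (hx : x ∈ Cof ξ) {y : Bd d} {N : ℕ}
    (h : ∀ i, N ≤ i → y i = x i) : y ∈ Cof ξ := by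
  obtain ⟨M, hM⟩ := hx
  exact ⟨max M N, fun i hi =>
    (hM i (le_trans (le_max_left _ _) hi)).trans (h i (le_trans (le_max_right _ _) hi)).symm⟩

lemma mem_cof_update {ξ x : Bd d} (hx : x ∈ Cof ξ) (k : ℕ) (c : ZMod d) :
    Function.update x k c ∈ Cof ξ :=
  mem_cof_of_agree hx (N := k+1) fun i hi => Function.update_of_ne (by omega) _ _

/-- agreement from position `n` on. -/
def Ag (n : ℕ) (x y : Bd d) : Prop := ∀ i, n ≤ i → x i = y i

lemma ag_refl (n : ℕ) (x : Bd d) : Ag n x x := fun _ _ => rfl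

def VAdj (d m : ℕ) (ω : ℕ → ((Fin m → ZMod d) →+ ZMod d)) {ξ : Bd d}
    (x y : ↥(Cof ξ)) : Prop :=
  x.1 ≠ y.1 ∧ mult d m ω x.1 y.1 ≠ 0

def CAdj (d m : ℕ) (ω : ℕ → ((Fin m → ZMod d) →+ ZMod d)) {ξ : Bd d}
    (n : ℕ) (x y : ↥(Cof ξ)) : Prop :=
  ¬ Ag n x.1 y.1 ∧ ∃ x' y' : ↥(Cof ξ), Ag n x.1 x'.1 ∧ Ag n y.1 y'.1 ∧ VAdj d m ω x' y'

lemma update_ne_self {u : Bd d} {k : ℕ} {γ : ZMod d} (hγ : γ ≠ 0) :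
    Function.update u k (u k + γ) ≠ u := by
  intro hEq
  have := congrFun hEq k
  rw [Function.update_self] at this
  exact hγ (by simpa using this)

lemma cAdj_iff (hd : 3 ≤ d) (hω : InOmega d m ω) {ξ : Bd d} (n : ℕ) (x y : ↥(Cof ξ)) :
    CAdj d m ω n x y ↔
      ∃ j : ℕ, ∃ γ : ZMod d, n ≤ j ∧ γ ≠ 0 ∧
        (∀ i, n ≤ i → i ≠ j → x.1 i = y.1 i) ∧ y.1 j = x.1 j + γ ∧
        (∀ r, j = r + 1 → n ≤ r →
          (∀ i, n ≤ i → i < r → x.1 i = (d : ZMod d) - 1) ∧ x.1 r = 0) := by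
  constructor
  · rintro ⟨hne, x', y', hxx', hyy', hne', hmult⟩
    obtain ⟨f, hf, hfx⟩ := (mult_ne_zero_iff hd ω _ _).mp hmult
    rcases gen_cases hd hf x'.1 with h0 | ⟨c, hc, hupd⟩ | ⟨r, c, hlev, hc, hupd⟩
    · exfalso
      apply hne
      intro i hi
      have : y'.1 i = x'.1 i := by rw [← hfx, h0]
      rw [hxx' i hi, ← this, ← hyy' i hi]
    · -- a-edge
      rcases Nat.eq_zero_or_pos n with rfl | hn
      · refine ⟨0, c, le_rfl, hc, ?_, ?_, ?_⟩
        · intro i _ hi0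
          have : y'.1 i = x'.1 i := by
            rw [← hfx, hupd]; exact Function.update_of_ne hi0 _ _
          rw [hxx' i (Nat.zero_le _), ← this, ← hyy' i (Nat.zero_le _)]
        · have h1 : y'.1 0 = x'.1 0 + c := by
            rw [← hfx, hupd]; exact Function.update_self _ _ _
          rw [hyy' 0 le_rfl, h1, hxx' 0 le_rfl]
        · intro r hr hnr; omega
      · exfalso
        apply hne
        intro i hi
        have : y'.1 i = x'.1 i := by
          rw [← hfx, hupd]; exact Function.update_of_ne (by omega) _ _
        rw [hxx' i hi, ← this, ← hyy' i hi]
    · -- b-edge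
      by_cases hrn : r + 1 < n
      · exfalso
        apply hne
        intro i hi
        have : y'.1 i = x'.1 i := by
          rw [← hfx, hupd]; exact Function.update_of_ne (by omega) _ _
        rw [hxx' i hi, ← this, ← hyy' i hi]
      · push_neg at hrn
        refine ⟨r+1, c, hrn, hc, ?_, ?_, ?_⟩
        · intro i hi hij
          have : y'.1 i = x'.1 i := by
            rw [← hfx, hupd]; exact Function.update_of_ne hij _ _
          rw [hxx' i hi, ← this, ← hyy' i hi]
        · have h1 : y'.1 (r+1) = x'.1 (r+1) + c := by
            rw [← hfx, hupd]; exact Function.update_self _ _ _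
          rw [hyy' (r+1) hrn, h1, hxx' (r+1) hrn]
        · rintro r' hr' hnr'
          have hrr : r' = r := by omega
          subst hrr
          exact ⟨fun i hi hir => (hxx' i hi).trans (hlev.1 i hir),
            (hxx' r' hnr').trans hlev.2⟩
  · rintro ⟨j, γ, hnj, hγ, hoff, hyj, hreal⟩
    have hne : ¬ Ag n x.1 y.1 := by
      intro hAg
      have := hAg j hnj
      rw [hyj] at this
      exact hγ (left_eq_add.mp this)
    by_cases hj : n < j
    · obtain ⟨r, rfl⟩ : ∃ r, j = r + 1 := ⟨j - 1, by omega⟩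
      have hnr : n ≤ r := by omega
      obtain ⟨hpat, hx0⟩ := hreal r rfl hnr
      set x'f : Bd d := fun i =>
        if i < r then (d : ZMod d) - 1 else if i = r then 0 else x.1 i with hx'f
      set y'f : Bd d := Function.update x'f (r+1) (x'f (r+1) + γ) with hy'f
      have hagf : ∀ i, n ≤ i → x'f i = x.1 i := by
        intro i hi
        by_cases h1 : i < r
        · rw [hx'f]; simp only [if_pos h1]; exact (hpat i hi h1).symm
        · by_cases h2 : i = r
          · subst h2; rw [hx'f]; simp only [if_neg h1, if_pos rfl]; exact hx0.symm
          · rw [hx'f]; simp only [if_neg h1, if_neg h2]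
      have hx'mem : x'f ∈ Cof ξ := mem_cof_of_agree x.2 hagf
      have hlev : IsLev d r x'f := by
        constructor
        · intro i hi; rw [hx'f]; simp only [if_pos hi]
        · rw [hx'f]; simp
      obtain ⟨f, hfmem, hfeq⟩ := b_edge_exists hd hω hlev hγ
      have hagx : Ag n x.1 x'f := fun i hi => (hagf i hi).symm
      have hagy : Ag n y.1 y'f := by
        intro i hi
        by_cases hir : i = r + 1
        · subst hir
          rw [hy'f, Function.update_self, hagf (r+1) hi, hyj]
        · rw [hy'f, Function.update_of_ne hir, hagf i hi]
          exact (hoff i hi hir).symm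
      exact ⟨hne, ⟨x'f, hx'mem⟩, ⟨y'f, mem_cof_update hx'mem _ _⟩, hagx, hagy,
        (update_ne_self hγ).symm,
        (mult_ne_zero_iff hd ω _ _).mpr ⟨f, hfmem, hfeq⟩⟩
    · have hjn : n = j := by omega
      subst hjn
      rcases Nat.eq_zero_or_pos n with rfl | hn
      · set y'f : Bd d := Function.update x.1 0 (x.1 0 + γ) with hy'f
        have hagy : Ag 0 y.1 y'f := by
          intro i _
          rcases eq_or_ne i 0 with rfl | hi0
          · rw [hy'f, Function.update_self]; exact hyj
          · rw [hy'f, Function.update_of_ne hi0]; exact (hoff i (Nat.zero_le _) hi0).symm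
        exact ⟨hne, x, ⟨y'f, mem_cof_update x.2 _ _⟩, ag_refl _ _, hagy,
          (update_ne_self hγ).symm,
          (mult_ne_zero_iff hd ω _ _).mpr (a_edge_exists hd ω x.1 hγ)⟩
      · obtain ⟨k, rfl⟩ : ∃ k, n = k + 1 := ⟨n - 1, by omega⟩
        set x'f : Bd d := fun i =>
          if i < k then (d : ZMod d) - 1 else if i = k then 0 else x.1 i with hx'f
        set y'f : Bd d := Function.update x'f (k+1) (x'f (k+1) + γ) with hy'f
        have hagf : ∀ i, k + 1 ≤ i → x'f i = x.1 i := by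
          intro i hi
          rw [hx'f]; simp only [if_neg (by omega : ¬ i < k), if_neg (by omega : ¬ i = k)]
        have hx'mem : x'f ∈ Cof ξ := mem_cof_of_agree x.2 hagf
        have hlev : IsLev d k x'f := by
          constructor
          · intro i hi; rw [hx'f]; simp only [if_pos hi]
          · rw [hx'f]; simp
        obtain ⟨f, hfmem, hfeq⟩ := b_edge_exists hd hω hlev hγ
        have hagx : Ag (k+1) x.1 x'f := fun i hi => (hagf i hi).symm
        have hagy : Ag (k+1) y.1 y'f := by
          intro i hi
          by_cases hik : i = k + 1
          · subst hik
            rw [hy'f, Function.update_self, hagf (k+1) hi, hyj]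
          · rw [hy'f, Function.update_of_ne hik, hagf i hi]
            exact (hoff i hi hik).symm
        exact ⟨hne, ⟨x'f, hx'mem⟩, ⟨y'f, mem_cof_update hx'mem _ _⟩, hagx, hagy,
          (update_ne_self hγ).symm,
          (mult_ne_zero_iff hd ω _ _).mpr ⟨f, hfmem, hfeq⟩⟩


lemma ag_mono {n n' : ℕ} (h : n ≤ n') {x y : Bd d} (hA : Ag n x y) : Ag n' x y :=
  fun i hi => hA i (le_trans h hi)

lemma ag_succ_iff (hd : 3 ≤ d) (hω : InOmega d m ω) {ξ : Bd d} (n : ℕ) (x y : ↥(Cof ξ)) :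
    Ag (n+1) x.1 y.1 ↔
      Ag n x.1 y.1 ∨
      (CAdj d m ω n x y ∧ ∃ z : ↥(Cof ξ),
        (Ag n z.1 x.1 ∨ Ag n z.1 y.1 ∨ (CAdj d m ω n z x ∧ CAdj d m ω n z y)) ∧
        ∀ w : ↥(Cof ξ), CAdj d m ω n z w →
          (Ag n w.1 x.1 ∨ Ag n w.1 y.1 ∨ (CAdj d m ω n w x ∧ CAdj d m ω n w y))) := by
  have h1 : (1 : ZMod d) ≠ 0 := one_ne_zero' hd
  constructor
  · intro hAg
    by_cases hxy : Ag n x.1 y.1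
    · exact Or.inl hxy
    right
    have hxyn : x.1 n ≠ y.1 n := by
      intro h
      apply hxy
      intro i hi
      rcases eq_or_lt_of_le hi with rfl | hlt
      · exact h
      · exact hAg i hlt
    have hCxy : CAdj d m ω n x y := by
      rw [cAdj_iff hd hω]
      exact ⟨n, y.1 n - x.1 n, le_rfl, sub_ne_zero.mpr (Ne.symm hxyn),
        fun i hi hin => hAg i (by omega), by ring,
        fun r hr hnr => by omega⟩
    obtain ⟨z, hzn0, hzn1, hzoff, hLz⟩ :
        ∃ z : ↥(Cof ξ), z.1 n ≠ 0 ∧ z.1 n ≠ (d : ZMod d) - 1 ∧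
          (∀ i, n ≤ i → i ≠ n → z.1 i = x.1 i) ∧
          (Ag n z.1 x.1 ∨ Ag n z.1 y.1 ∨ (CAdj d m ω n z x ∧ CAdj d m ω n z y)) := by
      by_cases hx0 : x.1 n ≠ 0 ∧ x.1 n ≠ (d : ZMod d) - 1
      · exact ⟨x, hx0.1, hx0.2, fun i _ _ => rfl, Or.inl (ag_refl _ _)⟩
      by_cases hy0 : y.1 n ≠ 0 ∧ y.1 n ≠ (d : ZMod d) - 1
      · exact ⟨y, hy0.1, hy0.2, fun i hi hin => (hAg i (by omega)).symm,
          Or.inr (Or.inl (ag_refl _ _))⟩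
      push_neg at hx0 hy0
      have hxn : x.1 n = 0 ∨ x.1 n = (d : ZMod d) - 1 := by
        by_cases h : x.1 n = 0
        · exact Or.inl h
        · exact Or.inr (hx0 h)
      have hyn : y.1 n = 0 ∨ y.1 n = (d : ZMod d) - 1 := by
        by_cases h : y.1 n = 0
        · exact Or.inl h
        · exact Or.inr (hy0 h)
      set zf : Bd d := Function.update x.1 n 1 with hzf
      have hz1 : zf n = 1 := by rw [hzf]; exact Function.update_self _ _ _
      have hzoff : ∀ i, n ≤ i → i ≠ n → zf i = x.1 i := by
        intro i _ hin
        rw [hzf]; exact Function.update_of_ne hin _ _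
      have hzx : zf n ≠ x.1 n := by
        rw [hz1]
        rcases hxn with h | h
        · rw [h]; exact h1
        · rw [h]; exact one_ne_dm1 hd
      have hzy : zf n ≠ y.1 n := by
        rw [hz1]
        rcases hyn with h | h
        · rw [h]; exact h1
        · rw [h]; exact one_ne_dm1 hd
      refine ⟨⟨zf, mem_cof_update x.2 _ _⟩, by show zf n ≠ 0; rw [hz1]; exact h1,
        by show zf n ≠ (d : ZMod d) - 1; rw [hz1]; exact one_ne_dm1 hd, hzoff,
        Or.inr (Or.inr ⟨?_, ?_⟩)⟩
      · rw [cAdj_iff hd hω]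
        exact ⟨n, x.1 n - zf n, le_rfl, sub_ne_zero.mpr (Ne.symm hzx), hzoff,
          by ring, fun r hr hnr => by omega⟩
      · rw [cAdj_iff hd hω]
        exact ⟨n, y.1 n - zf n, le_rfl, sub_ne_zero.mpr (Ne.symm hzy),
          fun i hi hin => (hzoff i hi hin).trans (hAg i (by omega)),
          by ring, fun r hr hnr => by omega⟩
    refine ⟨hCxy, z, hLz, ?_⟩
    intro w hCzw
    obtain ⟨j, γ', hnj, hγ', hoff, hwj, hreal⟩ := (cAdj_iff hd hω n z w).mp hCzw
    have hj : j = n := by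
      by_contra hne2
      obtain ⟨r, rfl⟩ : ∃ r, j = r + 1 := ⟨j - 1, by omega⟩
      obtain ⟨hpat, h0⟩ := hreal r rfl (by omega)
      rcases Nat.eq_or_lt_of_le (show n ≤ r by omega) with rfl | hlt
      · exact hzn0 h0
      · exact hzn1 (hpat n le_rfl hlt)
    subst hj
    have hwoff : ∀ i, j ≤ i → i ≠ j → w.1 i = x.1 i :=
      fun i hi hin => (hoff i hi hin).symm.trans (hzoff i hi hin)
    by_cases hwx : w.1 j = x.1 j
    · refine Or.inl ?_
      intro i hi
      rcases eq_or_ne i j with rfl | hin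
      · exact hwx
      · exact hwoff i hi hin
    by_cases hwy : w.1 j = y.1 j
    · refine Or.inr (Or.inl ?_)
      intro i hi
      rcases eq_or_ne i j with rfl | hin
      · exact hwy
      · exact (hwoff i hi hin).trans (hAg i (by omega))
    · refine Or.inr (Or.inr ⟨?_, ?_⟩)
      · rw [cAdj_iff hd hω]
        exact ⟨j, x.1 j - w.1 j, le_rfl, sub_ne_zero.mpr (Ne.symm hwx), hwoff,
          by ring, fun r hr hnr => by omega⟩
      · rw [cAdj_iff hd hω]
        exact ⟨j, y.1 j - w.1 j, le_rfl, sub_ne_zero.mpr (Ne.symm hwy),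
          fun i hi hin => (hwoff i hi hin).trans (hAg i (by omega)),
          by ring, fun r hr hnr => by omega⟩
  · rintro (h | ⟨hC, z, hLz, hall⟩)
    · exact ag_mono (by omega) h
    obtain ⟨j, γ, hnj, hγ, hoff, hyj, hreal⟩ := (cAdj_iff hd hω n x y).mp hC
    by_cases hj : j = n
    · subst hj
      intro i hi
      exact hoff i (by omega) (by omega)
    · exfalso
      have hnj' : n < j := by omega
      obtain ⟨r, rfl⟩ : ∃ r, j = r + 1 := ⟨j - 1, by omega⟩
      have hnr : n ≤ r := by omega
      have hzx : ∀ i, n ≤ i → i ≠ r + 1 → z.1 i = x.1 i := by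
        rcases hLz with hA | hA | ⟨hC1, hC2⟩
        · exact fun i hi _ => hA i hi
        · exact fun i hi hir => (hA i hi).trans (hoff i hi hir).symm
        · obtain ⟨j₁, γ₁, hnj₁, hγ₁, hoff₁, hxj₁, -⟩ := (cAdj_iff hd hω n z x).mp hC1
          obtain ⟨j₂, γ₂, hnj₂, hγ₂, hoff₂, hyj₂, -⟩ := (cAdj_iff hd hω n z y).mp hC2
          intro i hi hir
          by_cases hij : i = j₁
          · exfalso
            by_cases h12 : j₁ = j₂
            · have e1 : z.1 (r+1) = x.1 (r+1) := hoff₁ (r+1) (by omega) (by omega)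
              have e2 : z.1 (r+1) = y.1 (r+1) := hoff₂ (r+1) (by omega) (by omega)
              have e4 : y.1 (r+1) = x.1 (r+1) := e2.symm.trans e1
              rw [hyj] at e4
              exact hγ (by simpa using e4.symm)
            · have e1 : z.1 j₁ = y.1 j₁ := hoff₂ j₁ (by omega) h12
              have e2 : x.1 j₁ = y.1 j₁ := hoff j₁ (by omega) (by omega)
              have e3 : z.1 j₁ = x.1 j₁ := e1.trans e2.symm
              rw [hxj₁] at e3
              exact hγ₁ (left_eq_add.mp e3)
          · exact hoff₁ i hi hij
      have hyn : y.1 n = x.1 n := (hoff n le_rfl (by omega)).symm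
      set wf : Bd d := Function.update z.1 n (z.1 n + 1) with hwf
      have hwmem : wf ∈ Cof ξ := mem_cof_update z.2 _ _
      have hwn : wf n = x.1 n + 1 := by
        rw [hwf, Function.update_self, hzx n le_rfl (by omega)]
      have hwoff : ∀ i, n ≤ i → i ≠ n → wf i = z.1 i := by
        intro i _ hin
        rw [hwf]; exact Function.update_of_ne hin _ _
      have hCzw : CAdj d m ω n z ⟨wf, hwmem⟩ := by
        rw [cAdj_iff hd hω]
        refine ⟨n, 1, le_rfl, one_ne_zero' hd, fun i hi hin => (hwoff i hi hin).symm,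
          by show wf n = z.1 n + 1; rw [hwf]; exact Function.update_self _ _ _,
          fun r hr hnr => by omega⟩
      rcases hall ⟨wf, hwmem⟩ hCzw with hA | hA | ⟨hC1, hC2⟩
      · have hA' : wf n = x.1 n := hA n le_rfl
        rw [hwn] at hA'
        exact one_ne_zero' hd (by simpa using hA')
      · have hA' : wf n = y.1 n := hA n le_rfl
        rw [hwn, hyn] at hA'
        exact one_ne_zero' hd (by simpa using hA')
      · obtain ⟨j₃, γ₃, hnj₃, hγ₃, hoff₃, hxj₃, -⟩ := (cAdj_iff hd hω n _ x).mp hC1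
        obtain ⟨j₄, γ₄, hnj₄, hγ₄, hoff₄, hyj₄, -⟩ := (cAdj_iff hd hω n _ y).mp hC2
        have hwnx : wf n ≠ x.1 n := by
          rw [hwn]
          intro h
          exact one_ne_zero' hd (by simpa using h)
        have hwny : wf n ≠ y.1 n := by
          rw [hwn, hyn]
          intro h
          exact one_ne_zero' hd (by simpa using h)
        have hj₃ : j₃ = n := by
          by_contra h
          exact hwnx (hoff₃ n le_rfl (fun hh => h hh.symm))
        have hj₄ : j₄ = n := by
          by_contra h
          exact hwny (hoff₄ n le_rfl (fun hh => h hh.symm))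
        have e1 : z.1 (r+1) = x.1 (r+1) := by
          have h' : wf (r+1) = x.1 (r+1) := hoff₃ (r+1) (by omega) (by omega)
          rwa [hwoff (r+1) (by omega) (by omega)] at h'
        have e2 : z.1 (r+1) = y.1 (r+1) := by
          have h' : wf (r+1) = y.1 (r+1) := hoff₄ (r+1) (by omega) (by omega)
          rwa [hwoff (r+1) (by omega) (by omega)] at h'
        have : y.1 (r+1) = x.1 (r+1) := e2.symm.trans e1
        rw [hyj] at this
        exact hγ (by simpa using this.symm)


lemma vadj_equiv {ξ η : Bd d} {φ : ↥(Cof ξ) ≃ ↥(Cof η)}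
    (hiso : IsRootedIso d m ω ξ η φ) (x y : ↥(Cof ξ)) :
    VAdj d m ω x y ↔ VAdj d m ω (φ x) (φ y) := by
  have hne : x.1 ≠ y.1 ↔ (φ x).1 ≠ (φ y).1 := by
    rw [ne_eq, ne_eq, ← Subtype.ext_iff, ← Subtype.ext_iff, Equiv.apply_eq_iff_eq]
  unfold VAdj
  rw [← hiso.2 x y, hne]

lemma cadj_equiv {ξ η : Bd d} {φ : ↥(Cof ξ) ≃ ↥(Cof η)}
    (hiso : IsRootedIso d m ω ξ η φ) (n : ℕ)
    (ih : ∀ u v : ↥(Cof ξ), Ag n u.1 v.1 ↔ Ag n (φ u).1 (φ v).1)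
    (x y : ↥(Cof ξ)) :
    CAdj d m ω n x y ↔ CAdj d m ω n (φ x) (φ y) := by
  constructor
  · rintro ⟨hne, x', y', h1, h2, h3⟩
    exact ⟨fun h => hne ((ih x y).mpr h), φ x', φ y', (ih x x').mp h1, (ih y y').mp h2,
      (vadj_equiv hiso x' y').mp h3⟩
  · rintro ⟨hne, x'', y'', h1, h2, h3⟩
    refine ⟨fun h => hne ((ih x y).mp h), φ.symm x'', φ.symm y'', ?_, ?_, ?_⟩
    · apply (ih x (φ.symm x'')).mpr
      rw [Equiv.apply_symm_apply]
      exact h1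
    · apply (ih y (φ.symm y'')).mpr
      rw [Equiv.apply_symm_apply]
      exact h2
    · apply (vadj_equiv hiso (φ.symm x'') (φ.symm y'')).mpr
      rw [Equiv.apply_symm_apply, Equiv.apply_symm_apply]
      exact h3

lemma ag_equiv (hd : 3 ≤ d) (hω : InOmega d m ω) {ξ η : Bd d}
    {φ : ↥(Cof ξ) ≃ ↥(Cof η)} (hiso : IsRootedIso d m ω ξ η φ) :
    ∀ n (x y : ↥(Cof ξ)), Ag n x.1 y.1 ↔ Ag n (φ x).1 (φ y).1 := by
  intro n
  induction n with
  | zero =>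
    intro x y
    constructor
    · intro h
      have hxy : x = y := Subtype.ext (funext fun i => h i (Nat.zero_le _))
      rw [hxy]
      exact ag_refl _ _
    · intro h
      have hxy : φ x = φ y := Subtype.ext (funext fun i => h i (Nat.zero_le _))
      have := φ.injective hxy
      rw [this]
      exact ag_refl _ _
  | succ n ih =>
    intro x y
    rw [ag_succ_iff hd hω n x y, ag_succ_iff hd hω n (φ x) (φ y)]
    have hC := cadj_equiv hiso n ih
    constructor
    · rintro (h | ⟨hc, z, hLz, hall⟩)
      · exact Or.inl ((ih x y).mp h)
      refine Or.inr ⟨(hC x y).mp hc, φ z, ?_, ?_⟩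
      · rcases hLz with h | h | ⟨h1, h2⟩
        · exact Or.inl ((ih z x).mp h)
        · exact Or.inr (Or.inl ((ih z y).mp h))
        · exact Or.inr (Or.inr ⟨(hC z x).mp h1, (hC z y).mp h2⟩)
      · intro w hw
        obtain ⟨w', rfl⟩ := φ.surjective w
        rcases hall w' ((hC z w').mpr hw) with h | h | ⟨h1, h2⟩
        · exact Or.inl ((ih w' x).mp h)
        · exact Or.inr (Or.inl ((ih w' y).mp h))
        · exact Or.inr (Or.inr ⟨(hC w' x).mp h1, (hC w' y).mp h2⟩)
    · rintro (h | ⟨hc, z'', hLz, hall⟩)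
      · exact Or.inl ((ih x y).mpr h)
      refine Or.inr ⟨(hC x y).mpr hc, φ.symm z'', ?_, ?_⟩
      · have hz'' : φ (φ.symm z'') = z'' := Equiv.apply_symm_apply _ _
        rcases hLz with h | h | ⟨h1, h2⟩
        · exact Or.inl ((ih (φ.symm z'') x).mpr (by rw [hz'']; exact h))
        · exact Or.inr (Or.inl ((ih (φ.symm z'') y).mpr (by rw [hz'']; exact h)))
        · exact Or.inr (Or.inr ⟨(hC (φ.symm z'') x).mpr (by rw [hz'']; exact h1),
            (hC (φ.symm z'') y).mpr (by rw [hz'']; exact h2)⟩)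
      · intro w hw
        have hz'' : φ (φ.symm z'') = z'' := Equiv.apply_symm_apply _ _
        have hw' : CAdj d m ω n z'' (φ w) := by
          rw [← hz'']
          exact (hC (φ.symm z'') w).mp hw
        rcases hall (φ w) hw' with h | h | ⟨h1, h2⟩
        · exact Or.inl ((ih w x).mpr h)
        · exact Or.inr (Or.inl ((ih w y).mpr h))
        · exact Or.inr (Or.inr ⟨(hC w x).mpr h1, (hC w y).mpr h2⟩)

lemma test_iff (hd : 3 ≤ d) (hω : InOmega d m ω) (ξ : Bd d) (n : ℕ) :
    ξ n = 0 ↔ ∃ u : ↥(Cof ξ), Ag n ξ u.1 ∧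
      (∀ v : ↥(Cof ξ), VAdj d m ω u v → Ag (n+2) ξ v.1) ∧
      (∃ v : ↥(Cof ξ), VAdj d m ω u v ∧ ¬ Ag (n+1) ξ v.1) := by
  have h1 : (1 : ZMod d) ≠ 0 := one_ne_zero' hd
  constructor
  · intro hξn
    set uf : Bd d := fun i => if i < n then (d : ZMod d) - 1 else ξ i with huf
    have hufeq : ∀ i, n ≤ i → uf i = ξ i := by
      intro i hi
      rw [huf]; simp only [if_neg (by omega : ¬ i < n)]
    have hulev : IsLev d n uf := by
      constructor
      · intro i hi; rw [huf]; simp only [if_pos hi]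
      · rw [hufeq n le_rfl]; exact hξn
    have humem : uf ∈ Cof ξ := mem_cof_of_agree (self_mem_Cof ξ) hufeq
    have hagu : Ag n ξ uf := fun i hi => (hufeq i hi).symm
    refine ⟨⟨uf, humem⟩, hagu, ?_, ?_⟩
    · rintro v ⟨hne, hmult⟩
      obtain ⟨f, hf, hfu⟩ := (mult_ne_zero_iff hd ω _ _).mp hmult
      rcases gen_cases hd hf uf with h0 | ⟨c, hc, hupd⟩ | ⟨r, c, hlev, hc, hupd⟩
      · exact absurd (h0.symm.trans hfu) hne
      · intro i hi
        have hv : v.1 i = uf i := by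
          rw [← hfu, hupd]
          exact Function.update_of_ne (by omega) _ _
        rw [hv, hufeq i (by omega)]
      · have hrn : r = n := lev_unique hd hlev hulev
        subst hrn
        intro i hi
        have hv : v.1 i = uf i := by
          rw [← hfu, hupd]
          exact Function.update_of_ne (by omega) _ _
        rw [hv, hufeq i (by omega)]
    · obtain ⟨f, hf, hfeq⟩ := b_edge_exists hd hω hulev h1
      set vf : Bd d := Function.update uf (n+1) (uf (n+1) + 1) with hvf
      refine ⟨⟨vf, mem_cof_update humem _ _⟩,
        ⟨(update_ne_self h1).symm, (mult_ne_zero_iff hd ω _ _).mpr ⟨f, hf, hfeq⟩⟩, ?_⟩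
      intro hA
      have h' : ξ (n+1) = vf (n+1) := hA (n+1) le_rfl
      rw [hvf, Function.update_self, hufeq (n+1) (by omega)] at h'
      exact h1 (by simpa using h'.symm)
  · rintro ⟨u, hagu, hall, v, ⟨hne, hmult⟩, hnAg⟩
    obtain ⟨f, hf, hfu⟩ := (mult_ne_zero_iff hd ω _ _).mp hmult
    rcases gen_cases hd hf u.1 with h0 | ⟨c, hc, hupd⟩ | ⟨r, c, hlev, hc, hupd⟩
    · exact absurd (h0.symm.trans hfu) hne
    · exfalso
      apply hnAg
      intro i hi
      have hv : v.1 i = u.1 i := by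
        rw [← hfu, hupd]
        exact Function.update_of_ne (by omega) _ _
      rw [hv]
      exact hagu i (by omega)
    · have hrn : n ≤ r := by
        by_contra h
        apply hnAg
        intro i hi
        have hv : v.1 i = u.1 i := by
          rw [← hfu, hupd]
          exact Function.update_of_ne (by omega) _ _
        rw [hv]
        exact hagu i (by omega)
      obtain ⟨f', hf', hfeq'⟩ := b_edge_exists hd hω hlev h1
      set v'f : Bd d := Function.update u.1 (r+1) (u.1 (r+1) + 1) with hv'f
      have hv'mem : v'f ∈ Cof ξ := mem_cof_update u.2 _ _
      have hVAdj : VAdj d m ω u ⟨v'f, hv'mem⟩ :=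
        ⟨(update_ne_self h1).symm, (mult_ne_zero_iff hd ω _ _).mpr ⟨f', hf', hfeq'⟩⟩
      have hAg2 : Ag (n+2) ξ v'f := hall _ hVAdj
      have hrle : r + 1 ≤ n + 1 := by
        by_contra h
        have h' : ξ (r+1) = v'f (r+1) := hAg2 (r+1) (by omega)
        rw [hv'f, Function.update_self] at h'
        have hu : ξ (r+1) = u.1 (r+1) := hagu (r+1) (by omega)
        rw [← hu] at h'
        exact h1 (by simpa using h'.symm)
      have : r = n := by omega
      subst this
      exact (hagu r le_rfl).trans hlev.2

lemma isRootedIso_symm {ξ η : Bd d} {φ : ↥(Cof ξ) ≃ ↥(Cof η)}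
    (h : IsRootedIso d m ω ξ η φ) : IsRootedIso d m ω η ξ φ.symm := by
  constructor
  · rw [Equiv.symm_apply_eq]
    exact h.1.symm
  · intro u v
    have := h.2 (φ.symm u) (φ.symm v)
    rw [Equiv.apply_symm_apply, Equiv.apply_symm_apply] at this
    exact this.symm

lemma test_mono (hd : 3 ≤ d) (hω : InOmega d m ω) {ξ η : Bd d}
    {φ : ↥(Cof ξ) ≃ ↥(Cof η)} (hiso : IsRootedIso d m ω ξ η φ) (n : ℕ) :
    (∃ u : ↥(Cof ξ), Ag n ξ u.1 ∧
      (∀ v : ↥(Cof ξ), VAdj d m ω u v → Ag (n+2) ξ v.1) ∧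
      (∃ v : ↥(Cof ξ), VAdj d m ω u v ∧ ¬ Ag (n+1) ξ v.1)) →
    (∃ u : ↥(Cof η), Ag n η u.1 ∧
      (∀ v : ↥(Cof η), VAdj d m ω u v → Ag (n+2) η v.1) ∧
      (∃ v : ↥(Cof η), VAdj d m ω u v ∧ ¬ Ag (n+1) η v.1)) := by
  rintro ⟨u, h1, h2, v, hv, h3⟩
  have hroot : φ ⟨ξ, self_mem_Cof ξ⟩ = ⟨η, self_mem_Cof η⟩ := hiso.1
  have hAgE := ag_equiv hd hω hiso
  refine ⟨φ u, ?_, ?_, φ v, (vadj_equiv hiso u v).mp hv, ?_⟩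
  · have := (hAgE n ⟨ξ, self_mem_Cof ξ⟩ u).mp h1
    rwa [hroot] at this
  · intro w hw
    obtain ⟨w', rfl⟩ := φ.surjective w
    have hvw := h2 w' ((vadj_equiv hiso u w').mpr hw)
    have := (hAgE (n+2) ⟨ξ, self_mem_Cof ξ⟩ w').mp hvw
    rwa [hroot] at this
  · intro hcon
    apply h3
    have : Ag (n+1) ((⟨η, self_mem_Cof η⟩ : ↥(Cof η)).1) (φ v).1 := hcon
    rw [← hroot] at this
    exact (hAgE (n+1) ⟨ξ, self_mem_Cof ξ⟩ v).mpr this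

end SpinalZeros

/-- if `(Γ_ξ, ξ)` and `(Γ_η, η)` are isomorphic as rooted, undirected,
unlabeled graphs, then `ξ` and `η` have zeros at exactly the same positions. -/
theorem iso_same_zeros (d m : ℕ) (hd : 3 ≤ d) (hm : 1 ≤ m)
    (ω : ℕ → ((Fin m → ZMod d) →+ ZMod d)) (hω : InOmega d m ω) (ξ η : Bd d)
    (φ : ↥(Cof ξ) ≃ ↥(Cof η)) (hiso : IsRootedIso d m ω ξ η φ) :
    ∀ n : ℕ, ξ n = 0 ↔ η n = 0 := by
  intro n
  rw [SpinalZeros.test_iff hd hω ξ n, SpinalZeros.test_iff hd hω η n]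
  exact ⟨SpinalZeros.test_mono hd hω hiso n,
    SpinalZeros.test_mono hd hω (SpinalZeros.isRootedIso_symm hiso) n⟩

end
end

section
/- Let d ≥ 3, m ≥ 1, ω ∈ Ω_{d,m}, and ξ, η ∈ X^ℕ. If there exists an isomorphism of rooted, undirected, unlabeled graphs φ : (Γ_ξ, ξ) → (Γ_η, η), then ξ and η are compatible (ξ ∼ η). -/
open MeasureTheory

noncomputable section

/-- `ξ` has at least `r` consecutive letters `d-1` immediately before position `p`
(i.e. the block of `ξ` preceding position `p` ends in `(d-1)^r`). -/
def EndsIn (d : ℕ) (ξ : Bd d) (p r : ℕ) : Prop :=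
  r ≤ p ∧ ∀ i, p - r ≤ i → i < p → ξ i = (d : ZMod d) - 1

/-- Compatibility `ξ ∼ η`: zeros at exactly the same positions, and before each zero the
maximal runs of the letter `d-1` have the same length (equivalently, the corresponding
finite blocks end in `(d-1)^r` for exactly the same `r`'s). -/
def Compatible (d : ℕ) (ξ η : Bd d) : Prop :=
  (∀ n, ξ n = 0 ↔ η n = 0) ∧
  ∀ p, ξ p = 0 → ∀ r, (EndsIn d ξ p r ↔ EndsIn d η p r)

/-!
Every ingredient of `ξ ∼ η` can be read off the rooted multigraph. A vertex is *active*, i.e.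
of the form `(d-1)^r 0 ⋯` so that the `b_ω` move it, iff fewer generators fix it than fix some
other vertex. For `d ≥ 3`, the edges of the `b_ω` are the edges between active vertices lying
on a triangle of active vertices: three active vertices joined by `a`-edges would have three
distinct first letters in `{0, d-1}`. Removing an active vertex `u = (d-1)^r 0 ⋯` together with
its `b`-neighbours leaves finite pieces of at least `d^(r+1) - 1` vertices, and one of exactly
that size (the words agreeing with `(d-1)^r 0 1 ⋯` beyond `r`, except that word itself), so
the level `r` of `u` is an invariant. Hence so is agreement from position `q` on: it is
generated by the edges changing positions `< q`, i.e. the `a`-edges and the `b`-edges at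
vertices of level `< q - 1`. Finally, `ξ p = 0` with `(d-1)^r` just before `p` says exactly
that some vertex of level `p` agrees with the root from position `p - r` on.
-/

instance {d : ℕ} [Fact (2 < d)] : Fact (1 < d) := ⟨Nat.lt_of_succ_lt Fact.out⟩

theorem Relation.ReflTransGen.exists_subtype {α : Type*} {P : α → Prop} {r : α → α → Prop}
    (hP : ∀ a b, r a b → P a → P b) {a : Subtype P} {b : α} (h : ReflTransGen r a b) :
    ∃ hb : P b, ReflTransGen (fun x y : Subtype P => r x y) a ⟨b, hb⟩ := by
  induction h with
  | refl => exact ⟨a.2, .refl⟩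
  | tail _ hbc ih =>
    obtain ⟨hb, hab⟩ := ih
    exact ⟨hP _ _ hbc hb, hab.tail hbc⟩

namespace MultGraph

open Relation

variable {V W : Type*} (M : V → V → ℕ) (d : ℕ)

def Adj (u v : V) : Prop := u ≠ v ∧ M u v ≠ 0

def IsActive (u : V) : Prop := ∃ w, M u u < M w w

/-- An edge between active vertices that lies on a triangle of active vertices; in the
spinal Schreier graphs with `d ≥ 3` these are exactly the edges of the generators `b_ω`. -/
def IsBEdge (u v : V) : Prop :=
  IsActive M u ∧ IsActive M v ∧ Adj M u v ∧ ∃ w, IsActive M w ∧ Adj M u w ∧ Adj M v w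

def bStar (u : V) : Set V := insert u {v | IsBEdge M u v}

/-- `C` is a finite union of components of the graph with `bStar M u` removed, at least one
of which is attached to `bStar M u`. -/
def IsBranch (u : V) (C : Set V) : Prop :=
  C.Finite ∧ Disjoint C (bStar M u) ∧ (∃ x ∈ C, ∃ y ∈ bStar M u, Adj M x y) ∧
    ∀ x ∈ C, ∀ y, Adj M x y → y ∈ C ∨ y ∈ bStar M u

def IsLevel (j : ℕ) (u : V) : Prop :=
  IsActive M u ∧ IsLeast (Set.ncard '' {C | IsBranch M u C}) (d ^ (j + 1) - 1)

/-- The graph-theoretic counterpart of `Spinal.EdgeAt`. -/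
def IsEdgeAt : ℕ → V → V → Prop
  | 0, x, y => Adj M x y ∧ ¬ IsBEdge M x y
  | j + 1, x, y => IsBEdge M x y ∧ IsLevel M d j x

def TailRel (q : ℕ) : V → V → Prop := ReflTransGen fun x y => ∃ p < q, IsEdgeAt M d p x y

/-- The graph-theoretic counterpart of "`root` has the letter `0` at position `p`, preceded by
`r` letters `d - 1`". -/
def IsZeroAfterRun (root : V) (p r : ℕ) : Prop :=
  r ≤ p ∧ ∃ u, TailRel M d (p - r) root u ∧ IsLevel M d p u

section Map

variable {M} {N : W → W → ℕ} (e : V ≃ W) (he : ∀ u v, N (e u) (e v) = M u v)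
include he

theorem adj_map (u v : V) : Adj N (e u) (e v) ↔ Adj M u v := by
  simp [Adj, he]

theorem isActive_map (u : V) : IsActive N (e u) ↔ IsActive M u := by
  simp [IsActive, he, e.surjective.exists]

theorem isBEdge_map (u v : V) : IsBEdge N (e u) (e v) ↔ IsBEdge M u v := by
  simp [IsBEdge, isActive_map e he, adj_map e he, e.surjective.exists]

theorem bStar_map (u : V) : bStar N (e u) = e '' bStar M u := by
  ext w
  obtain ⟨v, rfl⟩ := e.surjective w
  simp [bStar, isBEdge_map e he]

theorem isBranch_map (u : V) (C : Set V) : IsBranch N (e u) (e '' C) ↔ IsBranch M u C := by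
  simp [IsBranch, bStar_map e he, Set.finite_image_iff e.injective.injOn,
    Set.disjoint_image_iff e.injective, e.surjective.forall, e.surjective.exists, adj_map e he]

theorem isLevel_map (j : ℕ) (u : V) : IsLevel N d j (e u) ↔ IsLevel M d j u := by
  have : Set.ncard '' {C | IsBranch N (e u) C} = Set.ncard '' {C | IsBranch M u C} := by
    ext n
    simp [(Set.image_surjective.2 e.surjective).exists, isBranch_map e he,
      Set.ncard_image_of_injective _ e.injective]
  rw [IsLevel, IsLevel, this, isActive_map e he]

theorem isEdgeAt_map (p : ℕ) (x y : V) : IsEdgeAt N d p (e x) (e y) ↔ IsEdgeAt M d p x y := by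
  cases p <;> simp [IsEdgeAt, adj_map e he, isBEdge_map e he, isLevel_map d e he]

theorem tailRel_map (q : ℕ) (u v : V) : TailRel N d q (e u) (e v) ↔ TailRel M d q u v := by
  unfold TailRel
  refine ⟨fun h => ?_, ReflTransGen.lift e (fun x y ⟨p, hp, hxy⟩ =>
    ⟨p, hp, (isEdgeAt_map d e he p x y).2 hxy⟩) u v⟩
  simpa [Function.onFun] using ReflTransGen.lift e.symm
    (p := fun x y => ∃ p < q, IsEdgeAt M d p x y)
    (fun x y ⟨p, hp, hxy⟩ => ⟨p, hp, (isEdgeAt_map d e he p _ _).1 (by simpa using hxy)⟩) _ _ h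

theorem isZeroAfterRun_map (root : V) (p r : ℕ) :
    IsZeroAfterRun N d (e root) p r ↔ IsZeroAfterRun M d root p r := by
  simp [IsZeroAfterRun, e.surjective.exists, tailRel_map d e he, isLevel_map d e he]

end Map

end MultGraph

namespace Spinal

open MultGraph Relation

variable {d m : ℕ} {ω : ℕ → ((Fin m → ZMod d) →+ ZMod d)} {ξ : Bd d}

/-- `u = (d-1)^r 0 ⋯`, the letter `d - 1` being `-1 : ZMod d`. -/
def ActiveAt (u : Bd d) (r : ℕ) : Prop := (∀ i < r, u i = -1) ∧ u r = 0

def DiffOnlyAt (u v : Bd d) (p : ℕ) : Prop := u p ≠ v p ∧ ∀ n ≠ p, u n = v n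

/-- The edges of the Schreier graph changing the letter at position `p`: for `p = 0` those
of the generators `a^j`, for `p = r + 1` those of the generators `b_ω` at a vertex
active at `r`. -/
def EdgeAt : ℕ → Bd d → Bd d → Prop
  | 0, u, v => DiffOnlyAt u v 0
  | r + 1, u, v => ActiveAt u r ∧ DiffOnlyAt u v (r + 1)

def spine (q : ℕ) (t : Bd d) : Bd d := fun n => if n < q then -1 else if n = q then 0 else t n

theorem zero_ne_neg_one [Fact (1 < d)] : (0 : ZMod d) ≠ -1 :=
  (neg_ne_zero.mpr one_ne_zero).symm

theorem exists_ne_ne [Fact (2 < d)] (a b : ZMod d) : ∃ c, c ≠ a ∧ c ≠ b := by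
  obtain ⟨c, -, hc⟩ := Finset.exists_mem_notMem_of_card_lt_card (s := {a, b})
    (t := Finset.univ) ((Finset.card_le_two).trans_lt (by simpa using Fact.out))
  exact ⟨c, by simpa [not_or] using hc⟩

theorem endsIn_zero (ζ : Bd d) (p : ℕ) : EndsIn d ζ p 0 :=
  ⟨p.zero_le, fun _ _ _ => by omega⟩

theorem ActiveAt.unique [Fact (1 < d)] {u : Bd d} {r r' : ℕ} (h : ActiveAt u r)
    (h' : ActiveAt u r') : r = r' := by
  by_contra hne
  rcases Nat.lt_or_gt_of_ne hne with hlt | hlt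
  · exact zero_ne_neg_one (h.2.symm.trans (h'.1 r hlt))
  · exact zero_ne_neg_one (h'.2.symm.trans (h.1 r' hlt))

theorem ActiveAt.apply_zero {u : Bd d} {r : ℕ} (h : ActiveAt u r) : u 0 = 0 ∨ u 0 = -1 := by
  rcases r.eq_zero_or_pos with rfl | hr
  exacts [Or.inl h.2, Or.inr (h.1 0 hr)]

theorem ActiveAt.eq_of_eq_of_lt {u v : Bd d} {r : ℕ} (hu : ActiveAt u r) (hv : ActiveAt v r)
    (huv : ∀ n, r < n → u n = v n) : u = v := funext fun n => by
  rcases lt_trichotomy n r with hn | rfl | hn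
  exacts [(hu.1 n hn).trans (hv.1 n hn).symm, hu.2.trans hv.2.symm, huv n hn]

theorem not_activeAt_of_triangle {u v w : Bd d} (huv : u 0 ≠ v 0) (huw : u 0 ≠ w 0)
    (hvw : v 0 ≠ w 0) {r₁ r₂ r₃ : ℕ} (hu : ActiveAt u r₁) (hv : ActiveAt v r₂) :
    ¬ ActiveAt w r₃ := fun hw => by
  rcases hu.apply_zero with h₁ | h₁ <;> rcases hv.apply_zero with h₂ | h₂ <;>
    rcases hw.apply_zero with h₃ | h₃ <;> simp_all

theorem DiffOnlyAt.symm {u v : Bd d} {p : ℕ} (h : DiffOnlyAt u v p) : DiffOnlyAt v u p :=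
  ⟨h.1.symm, fun n hn => (h.2 n hn).symm⟩

theorem DiffOnlyAt.unique {u v : Bd d} {p p' : ℕ} (h : DiffOnlyAt u v p)
    (h' : DiffOnlyAt u v p') : p = p' :=
  by_contra fun hne => h.1 (h'.2 p hne)

theorem DiffOnlyAt.eq_of_triangle {u v w : Bd d} {p p' p'' : ℕ} (huv : DiffOnlyAt u v p)
    (huw : DiffOnlyAt u w p') (hvw : DiffOnlyAt v w p'') : p' = p := by
  by_contra hne
  have hv : v p' ≠ w p' := by rw [← huv.2 p' hne]; exact huw.1
  have hp'' : p'' = p' := by_contra fun h => hv (hvw.2 p' (Ne.symm h))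
  exact huv.1 (by rw [huw.2 p (Ne.symm hne), hvw.2 p (by omega)])

theorem EdgeAt.diffOnlyAt {u v : Bd d} : ∀ {p : ℕ}, EdgeAt p u v → DiffOnlyAt u v p
  | 0, h => h
  | _ + 1, h => h.2

theorem EdgeAt.symm {u v : Bd d} : ∀ {p : ℕ}, EdgeAt p u v → EdgeAt p v u
  | 0, h => DiffOnlyAt.symm h
  | r + 1, ⟨hu, huv⟩ =>
    ⟨⟨fun i hi => huv.2 i (by omega) ▸ hu.1 i hi, huv.2 r (by omega) ▸ hu.2⟩, huv.symm⟩

theorem EdgeAt.apply_of_ne {u v : Bd d} {p n : ℕ} (h : EdgeAt p u v) (hn : n ≠ p) :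
    u n = v n :=
  h.diffOnlyAt.2 n hn

/-- The words agreeing with `y = (d-1)^r 0 1 ⋯` beyond `r` can only be left through `y`. -/
theorem EdgeAt.le_of_eq_of_lt [Fact (2 < d)] {y w v : Bd d} {r p : ℕ} (hy : ActiveAt y r)
    (hy1 : y (r + 1) = 1) (hwy : w ≠ y) (hw : ∀ n, r < n → w n = y n) (h : EdgeAt p w v) :
    p ≤ r := by
  rcases p with _ | r'
  · omega
  rcases lt_trichotomy r' r with hr | rfl | hr
  · omega
  · exact (hwy (h.1.eq_of_eq_of_lt hy hw)).elim
  · have := hw (r + 1) (by omega)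
    rcases eq_or_lt_of_le (Nat.succ_le_of_lt hr) with rfl | hr'
    · exact (one_ne_zero (hy1 ▸ this ▸ h.1.2)).elim
    · exact (ZMod.neg_one_ne_one (hy1 ▸ this ▸ h.1.1 (r + 1) hr').symm).elim

theorem spine_activeAt (q : ℕ) (t : Bd d) : ActiveAt (spine q t) q :=
  ⟨fun i hi => if_pos hi, by simp [spine]⟩

theorem spine_of_lt {q n : ℕ} (t : Bd d) (hn : q < n) : spine q t n = t n := by
  simp [spine, hn.not_gt, hn.ne']

theorem spine_congr_of_le {q n : ℕ} (hn : n ≤ q) (t t' : Bd d) :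
    spine q t n = spine q t' n := by
  simp only [spine]
  split_ifs <;> first | rfl | omega

theorem spine_eq_or_edgeAt {q : ℕ} {u v : Bd d} (huv : ∀ n, q + 1 < n → u n = v n) :
    spine q u = spine q v ∨ EdgeAt (q + 1) (spine q u) (spine q v) := by
  by_cases h : u (q + 1) = v (q + 1)
  · refine Or.inl (funext fun n => ?_)
    rcases le_or_gt n q with hn | hn
    · exact spine_congr_of_le hn u v
    rw [spine_of_lt u hn, spine_of_lt v hn]
    rcases eq_or_lt_of_le (Nat.succ_le_of_lt hn) with rfl | hn'
    exacts [h, huv n hn']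
  refine Or.inr ⟨spine_activeAt q u, by rwa [spine_of_lt u (by omega), spine_of_lt v (by omega)],
    fun n hn => ?_⟩
  rcases le_or_gt n q with hn' | hn'
  · exact spine_congr_of_le hn' u v
  · rw [spine_of_lt u hn', spine_of_lt v hn', huv n (by omega)]

/-- The path runs through the words `spine (q - 1) _`, joined by edges at position `q`;
`hF` keeps these words out of `F`. -/
theorem reflTransGen_edgeAt_of_eq_of_lt [Fact (1 < d)] (q : ℕ) (F : Set (Bd d)) {u v : Bd d}
    (huv : ∀ n, q < n → u n = v n)
    (hF : ∀ z ∈ F, (∀ n, q < n → z n = u n) → ∀ i < q, z i = -1)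
    (hu : u ∉ F) (hv : v ∉ F) :
    ReflTransGen (fun x y => (∃ p ≤ q, EdgeAt p x y) ∧ y ∉ F) u v := by
  induction q generalizing u v with
  | zero =>
    by_cases h : u = v
    · exact h ▸ .refl
    refine .single ⟨⟨0, le_rfl, fun h0 => h (funext fun n => ?_), fun n hn => huv n
      (Nat.pos_of_ne_zero hn)⟩, hv⟩
    rcases n.eq_zero_or_pos with rfl | hn
    exacts [h0, huv n hn]
  | succ q ih =>
    have hvu : ∀ n, q + 1 < n → v n = u n := fun n hn => (huv n hn).symm
    have path : ∀ w w', (∀ n, q < n → w n = w' n) → (∀ n, q + 1 < n → w n = u n) →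
        w ∉ F → w' ∉ F →
        ReflTransGen (fun x y => (∃ p ≤ q + 1, EdgeAt p x y) ∧ y ∉ F) w w' :=
      fun w w' hww' hw hwF hw'F => ReflTransGen.mono
        (fun _ _ ⟨⟨p, hp, he⟩, hy⟩ => ⟨⟨p, by omega, he⟩, hy⟩) _ _
        (ih hww' (fun z hz hzw i hi => hF z hz (fun n hn => (hzw n (by omega)).trans
          (hw n hn)) i (by omega)) hwF hw'F)
    have hspine : ∀ w, (∀ n, q + 1 < n → w n = u n) → spine q w ∉ F := fun w hw hs =>
      zero_ne_neg_one ((spine_activeAt q w).2 ▸ hF _ hs (fun n hn =>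
        (spine_of_lt w (by omega)).trans (hw n hn)) q (by omega))
    have hu' := path u (spine q u) (fun n hn => (spine_of_lt u hn).symm) (fun _ _ => rfl) hu
      (hspine u fun _ _ => rfl)
    have hv' := path (spine q v) v (fun n hn => spine_of_lt v hn)
      (fun n hn => (spine_of_lt v (by omega)).trans (hvu n hn)) (hspine v hvu) hv
    refine (hu'.trans ?_).trans hv'
    rcases spine_eq_or_edgeAt huv with h | h
    · exact h ▸ .refl
    · exact .single ⟨⟨q + 1, le_rfl, h⟩, hspine v hvu⟩

theorem aMap_iterate (j : ℕ) (u : Bd d) :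
    (aMap d)^[j] u = Function.update u 0 (u 0 + j) := by
  induction j with
  | zero => simp
  | succ j ih =>
    rw [Function.iterate_succ_apply', ih]
    funext n
    rcases eq_or_ne n 0 with rfl | hn
    · simp [aMap, add_assoc]
    · simp [aMap, hn]

theorem natCast_ne_zero_of_pos_of_lt {j : ℕ} (hj : 0 < j) (hjd : j < d) : (j : ZMod d) ≠ 0 :=
  fun h => Nat.not_dvd_of_pos_of_lt hj hjd ((ZMod.natCast_eq_zero_iff j d).1 h)

theorem aMap_iterate_ne {j : ℕ} (hj : 1 ≤ j) (hjd : j ≤ d - 1) (u : Bd d) :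
    (aMap d)^[j] u ≠ u := fun h => by
  simpa [aMap_iterate, natCast_ne_zero_of_pos_of_lt (d := d) hj (by omega)] using congrFun h 0

theorem bMap_of_activeAt [Fact (1 < d)] {u : Bd d} {r : ℕ} (hu : ActiveAt u r)
    (b : Fin m → ZMod d) :
    bMap d m ω b u = Function.update u (r + 1) (u (r + 1) + ω r b) := by
  funext n
  rcases eq_or_ne n (r + 1) with rfl | hn
  · rw [bMap, if_pos ⟨r.succ_ne_zero, by simpa using hu.1, by simpa using hu.2⟩]
    simp
  · rw [bMap, if_neg, Function.update_of_ne hn]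
    rintro ⟨h0, h1, h2⟩
    have := hu.unique ⟨by simpa using h1, h2⟩
    omega

theorem bMap_of_not_activeAt {u : Bd d} (hu : ∀ r, ¬ ActiveAt u r) (b : Fin m → ZMod d) :
    bMap d m ω b u = u := by
  funext n
  rw [bMap, if_neg]
  exact fun ⟨_, h1, h2⟩ => hu (n - 1) ⟨by simpa using h1, h2⟩

theorem genSet_finite [NeZero d] : (genSet d m ω).Finite := by
  refine (((Set.finite_Iic d).image fun j => (aMap d)^[j]).union
    (Set.finite_range (bMap d m ω))).subset ?_
  rintro f (⟨j, -, hj, rfl⟩ | ⟨b, -, rfl⟩)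
  exacts [Or.inl ⟨j, by simp; omega, rfl⟩, Or.inr ⟨b, rfl⟩]

theorem mult_eq_ncard (u v : Bd d) : mult d m ω u v = {f ∈ genSet d m ω | f u = v}.ncard :=
  Nat.card_coe_set_eq _

theorem mult_ne_zero_iff [NeZero d] {u v : Bd d} :
    mult d m ω u v ≠ 0 ↔ ∃ f ∈ genSet d m ω, f u = v := by
  rw [mult_eq_ncard, ← Nat.pos_iff_ne_zero, Set.ncard_pos (genSet_finite.subset fun f hf => hf.1)]
  rfl

theorem exists_mem_genSet_apply_eq_iff [Fact (1 < d)] (hω : ∀ n, Function.Surjective (ω n))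
    {u v : Bd d} (huv : u ≠ v) : (∃ f ∈ genSet d m ω, f u = v) ↔ ∃ p, EdgeAt p u v := by
  constructor
  · rintro ⟨f, ⟨j, hj, hjd, rfl⟩ | ⟨b, -, rfl⟩, rfl⟩
    · rw [aMap_iterate]
      exact ⟨0, by simp [natCast_ne_zero_of_pos_of_lt (d := d) hj (by omega)],
        fun n hn => by simp [hn]⟩
    · by_cases hu : ∃ r, ActiveAt u r
      · obtain ⟨r, hr⟩ := hu
        rw [bMap_of_activeAt hr] at huv ⊢
        have hb : ω r b ≠ 0 := fun h => huv (by simp [h])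
        exact ⟨r + 1, hr, by simpa using hb, fun n hn => by simp [hn]⟩
      · exact (huv (bMap_of_not_activeAt (not_exists.mp hu) b).symm).elim
  · rintro ⟨_ | r, h⟩
    · refine ⟨_, Or.inl ⟨(v 0 - u 0).val, ?_, ?_, rfl⟩, ?_⟩
      · exact Nat.one_le_iff_ne_zero.mpr ((ZMod.val_ne_zero _).mpr (sub_ne_zero.mpr h.1.symm))
      · have := ZMod.val_lt (v 0 - u 0); omega
      · rw [aMap_iterate]
        funext n
        rcases eq_or_ne n 0 with rfl | hn
        · simp
        · simp [hn, h.2 n hn]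
    · obtain ⟨b, hb⟩ := hω r (v (r + 1) - u (r + 1))
      have hb0 : b ≠ 0 := by
        rintro rfl
        exact h.2.1 (sub_eq_zero.mp (hb.symm.trans (map_zero _))).symm
      refine ⟨_, Or.inr ⟨b, hb0, rfl⟩, ?_⟩
      rw [bMap_of_activeAt h.1, hb, add_sub_cancel]
      funext n
      rcases eq_or_ne n (r + 1) with rfl | hn
      · simp
      · simp [hn, h.2.2 n hn]

def bGenSet (d m : ℕ) (ω : ℕ → ((Fin m → ZMod d) →+ ZMod d)) : Set (Bd d → Bd d) :=
  {f | ∃ b, b ≠ 0 ∧ f = bMap d m ω b}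

theorem bGenSet_finite [NeZero d] : (bGenSet d m ω).Finite :=
  (Set.finite_range (bMap d m ω)).subset fun _ ⟨b, _, hb⟩ => ⟨b, hb.symm⟩

theorem fixers_subset_bGenSet (u : Bd d) : {f ∈ genSet d m ω | f u = u} ⊆ bGenSet d m ω := by
  rintro f ⟨⟨j, hj, hjd, rfl⟩ | hb, hfu⟩
  exacts [(aMap_iterate_ne hj hjd u hfu).elim, hb]

theorem fixers_of_not_activeAt {u : Bd d} (hu : ∀ r, ¬ ActiveAt u r) :
    {f ∈ genSet d m ω | f u = u} = bGenSet d m ω := by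
  refine (fixers_subset_bGenSet u).antisymm fun f hf => ⟨Or.inr hf, ?_⟩
  obtain ⟨b, -, rfl⟩ := hf
  exact bMap_of_not_activeAt hu b

theorem mult_self_le_of_not_activeAt [NeZero d] {u : Bd d} (hu : ∀ r, ¬ ActiveAt u r)
    (w : Bd d) : mult d m ω w w ≤ mult d m ω u u := by
  rw [mult_eq_ncard, mult_eq_ncard, fixers_of_not_activeAt hu]
  exact Set.ncard_le_ncard (fixers_subset_bGenSet w) bGenSet_finite

theorem mult_self_lt_of_activeAt [Fact (1 < d)] (hω : ∀ n, Function.Surjective (ω n))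
    {u w : Bd d} {r : ℕ} (hu : ActiveAt u r) (hw : ∀ r, ¬ ActiveAt w r) :
    mult d m ω u u < mult d m ω w w := by
  rw [mult_eq_ncard, mult_eq_ncard, fixers_of_not_activeAt hw]
  obtain ⟨b, hb⟩ := hω r 1
  have hb0 : b ≠ 0 := by rintro rfl; exact zero_ne_one (hb ▸ (map_zero (ω r)).symm)
  refine Set.ncard_lt_ncard ((Set.ssubset_iff_of_subset (fixers_subset_bGenSet u)).2
    ⟨_, ⟨b, hb0, rfl⟩, fun h => ?_⟩) bGenSet_finite
  have := congrFun h.2 (r + 1)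
  rw [bMap_of_activeAt hu, hb, Function.update_self, add_eq_left] at this
  exact one_ne_zero this

def cofMult (d m : ℕ) (ω : ℕ → ((Fin m → ZMod d) →+ ZMod d)) (ξ : Bd d) :
    Cof ξ → Cof ξ → ℕ :=
  fun u v => mult d m ω u v

theorem mem_Cof_of_eq_of_lt {u w : Bd d} (hu : u ∈ Cof ξ) (q : ℕ)
    (h : ∀ n, q < n → w n = u n) : w ∈ Cof ξ := by
  obtain ⟨N, hN⟩ := hu
  exact ⟨max N (q + 1), fun n hn => (hN n (by omega)).trans (h n (by omega)).symm⟩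

theorem update_mem_Cof {u : Bd d} (hu : u ∈ Cof ξ) (p : ℕ) (c : ZMod d) :
    Function.update u p c ∈ Cof ξ :=
  mem_Cof_of_eq_of_lt hu p fun _ hn => Function.update_of_ne hn.ne' _ _

theorem EdgeAt.mem_Cof {p : ℕ} {u v : Bd d} (h : EdgeAt p u v) (hu : u ∈ Cof ξ) :
    v ∈ Cof ξ :=
  mem_Cof_of_eq_of_lt hu p fun _ hn => (h.apply_of_ne hn.ne').symm

def tailClass (q : ℕ) (t : Cof ξ) : Set (Cof ξ) := {w | ∀ n, q < n → w.1 n = t.1 n}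

theorem tailClass_eq_range (q : ℕ) (t : Cof ξ) :
    tailClass q t = Set.range fun a : Fin (q + 1) → ZMod d =>
      (⟨fun n => if h : n < q + 1 then a ⟨n, h⟩ else t.1 n,
        mem_Cof_of_eq_of_lt t.2 q fun n hn => dif_neg (by omega)⟩ : Cof ξ) := by
  ext w
  refine ⟨fun hw => ⟨fun i => w.1 i, Subtype.ext (funext fun n => ?_)⟩, ?_⟩
  · by_cases hn : n < q + 1
    · simp [hn]
    · simp [hn, hw n (by omega)]
  · rintro ⟨a, rfl⟩ n hn
    simp [show ¬ n < q + 1 by omega]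

theorem tailClass_finite [NeZero d] (q : ℕ) (t : Cof ξ) : (tailClass q t).Finite :=
  tailClass_eq_range q t ▸ Set.finite_range _

theorem ncard_tailClass [NeZero d] (q : ℕ) (t : Cof ξ) :
    (tailClass q t).ncard = d ^ (q + 1) := by
  rw [tailClass_eq_range, Set.ncard_range_of_injective]
  · simp
  · intro a a' h
    funext i
    simpa [Nat.lt_succ_iff.mp i.2] using congrFun (congrArg Subtype.val h) i

theorem self_mem_tailClass (q : ℕ) (t : Cof ξ) : t ∈ tailClass q t := fun _ _ => rfl

theorem adj_cofMult_iff [Fact (1 < d)] (hω : ∀ n, Function.Surjective (ω n)) (u v : Cof ξ) :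
    Adj (cofMult d m ω ξ) u v ↔ ∃ p, EdgeAt p u.1 v.1 := by
  constructor
  · rintro ⟨huv, h⟩
    exact (exists_mem_genSet_apply_eq_iff hω (Subtype.coe_injective.ne huv)).1
      (mult_ne_zero_iff.1 h)
  · rintro ⟨p, h⟩
    have huv : u.1 ≠ v.1 := fun e => h.diffOnlyAt.1 (congrFun e p)
    exact ⟨fun e => huv (congrArg _ e),
      mult_ne_zero_iff.2 ((exists_mem_genSet_apply_eq_iff hω huv).2 ⟨p, h⟩)⟩

variable [Fact (2 < d)] (hω : ∀ n, Function.Surjective (ω n))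
include hω

theorem isActive_cofMult_iff (u : Cof ξ) : IsActive (cofMult d m ω ξ) u ↔ ∃ r, ActiveAt u.1 r := by
  constructor
  · rintro ⟨w, hw⟩
    by_contra h
    exact (mult_self_le_of_not_activeAt (not_exists.mp h) w.1).not_gt hw
  · rintro ⟨r, hr⟩
    have hw : ∀ r, ¬ ActiveAt (Function.update u.1 0 1) r := fun r h => by
      rcases h.apply_zero with h0 | h0 <;> simp at h0
      exact ZMod.neg_one_ne_one h0.symm
    exact ⟨⟨_, update_mem_Cof u.2 0 1⟩, mult_self_lt_of_activeAt hω hr hw⟩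

theorem isBEdge_cofMult_iff (u v : Cof ξ) : IsBEdge (cofMult d m ω ξ) u v ↔ ∃ r, EdgeAt (r + 1) u.1 v.1 := by
  simp only [IsBEdge, isActive_cofMult_iff hω, adj_cofMult_iff hω]
  constructor
  · rintro ⟨⟨r₁, hu⟩, ⟨r₂, hv⟩, ⟨_ | r, huv⟩, w, ⟨r₃, hw⟩, ⟨p, huw⟩, ⟨p', hvw⟩⟩
    · have hp := DiffOnlyAt.eq_of_triangle huv huw.diffOnlyAt hvw.diffOnlyAt
      have hp' := DiffOnlyAt.eq_of_triangle huv.symm hvw.diffOnlyAt huw.diffOnlyAt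
      subst hp hp'
      exact (not_activeAt_of_triangle huv.1 huw.diffOnlyAt.1 hvw.diffOnlyAt.1 hu hv hw).elim
    · exact ⟨r, huv⟩
  · rintro ⟨r, huv⟩
    have hvu := huv.symm
    obtain ⟨c, hcu, hcv⟩ := exists_ne_ne (u.1 (r + 1)) (v.1 (r + 1))
    have hw : Function.update u.1 (r + 1) c = Function.update v.1 (r + 1) c :=
      funext fun n => by
        rcases eq_or_ne n (r + 1) with rfl | hn <;> simp [*, huv.apply_of_ne]
    have edge : ∀ {t : Bd d}, ActiveAt t r → c ≠ t (r + 1) →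
        EdgeAt (r + 1) t (Function.update t (r + 1) c) := fun ht hc =>
      ⟨ht, by simpa using hc.symm, fun n hn => by simp [hn]⟩
    obtain ⟨w, hw_def⟩ : ∃ w : Cof ξ, w.1 = Function.update u.1 (r + 1) c :=
      ⟨⟨_, update_mem_Cof u.2 (r + 1) c⟩, rfl⟩
    have huw : EdgeAt (r + 1) u.1 w.1 := hw_def ▸ edge huv.1 hcu
    have hvw : EdgeAt (r + 1) v.1 w.1 := by rw [hw_def, hw]; exact edge hvu.1 hcv
    exact ⟨⟨r, huv.1⟩, ⟨r, hvu.1⟩, ⟨r + 1, huv⟩, w, ⟨r, huw.symm.1⟩, ⟨r + 1, huw⟩,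
      ⟨r + 1, hvw⟩⟩

theorem mem_bStar_cofMult_iff {u : Cof ξ} {r : ℕ} (hu : ActiveAt u.1 r) (v : Cof ξ) :
    v ∈ bStar (cofMult d m ω ξ) u ↔ ∀ n ≠ r + 1, v.1 n = u.1 n := by
  simp only [bStar, Set.mem_insert_iff, Set.mem_ofPred_eq, isBEdge_cofMult_iff hω]
  constructor
  · rintro (rfl | ⟨r', huv⟩)
    · exact fun _ _ => rfl
    · obtain rfl := huv.1.unique hu
      exact fun n hn => (huv.apply_of_ne hn).symm
  · intro h
    by_cases hr : v.1 (r + 1) = u.1 (r + 1)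
    · exact Or.inl (Subtype.ext (funext fun n => by
        rcases eq_or_ne n (r + 1) with rfl | hn
        exacts [hr, h n hn]))
    · exact Or.inr ⟨r, hu, Ne.symm hr, fun n hn => (h n hn).symm⟩

theorem eq_of_mem_bStar_of_mem_tailClass {u : Cof ξ} {r : ℕ} (hu : ActiveAt u.1 r)
    {y w : Cof ξ} (hy : y ∈ bStar (cofMult d m ω ξ) u) (hw : w ∈ bStar (cofMult d m ω ξ) u)
    (hwy : w ∈ tailClass r y) : w = y := by
  rw [mem_bStar_cofMult_iff hω hu] at hy hw
  refine Subtype.ext (funext fun n => ?_)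
  rcases eq_or_ne n (r + 1) with rfl | hn
  exacts [hwy _ (by omega), (hw n hn).trans (hy n hn).symm]

theorem exists_isBranch_ncard_eq {u : Cof ξ} {r : ℕ} (hu : ActiveAt u.1 r) :
    ∃ C, IsBranch (cofMult d m ω ξ) u C ∧ C.ncard = d ^ (r + 1) - 1 := by
  obtain ⟨y, hy_def⟩ : ∃ y : Cof ξ, y.1 = Function.update u.1 (r + 1) 1 :=
    ⟨⟨_, update_mem_Cof u.2 (r + 1) 1⟩, rfl⟩
  have hyu : ∀ n ≠ r + 1, y.1 n = u.1 n := fun n hn => by simp [hy_def, hn]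
  have hy : ActiveAt y.1 r :=
    ⟨fun i hi => (hyu i (by omega)).trans (hu.1 i hi), (hyu r (by omega)).trans hu.2⟩
  have hyS := (mem_bStar_cofMult_iff hω hu y).2 hyu
  obtain ⟨x, hx_def⟩ : ∃ x : Cof ξ, x.1 = Function.update y.1 0 (y.1 0 + 1) :=
    ⟨⟨_, update_mem_Cof y.2 0 _⟩, rfl⟩
  have hxy : EdgeAt 0 x.1 y.1 := ⟨by simp [hx_def], fun n hn => by simp [hx_def, hn]⟩
  refine ⟨tailClass r y \ {y}, ⟨(tailClass_finite r y).sdiff, ?_, ⟨x, ⟨fun n hn => ?_,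
    fun h => hxy.1 (by rw [h])⟩, y, hyS, (adj_cofMult_iff hω x y).2 ⟨0, hxy⟩⟩, ?_⟩,
    by rw [Set.ncard_sdiff_singleton_of_mem (self_mem_tailClass r y), ncard_tailClass]⟩
  · exact Set.disjoint_left.2 fun w ⟨hwC, hwy⟩ hwS =>
      hwy (eq_of_mem_bStar_of_mem_tailClass hω hu hyS hwS hwC)
  · exact hxy.apply_of_ne (by omega)
  · rintro w ⟨hwC, hwy⟩ v hwv
    obtain ⟨p, h⟩ := (adj_cofMult_iff hω w v).1 hwv
    have hp := h.le_of_eq_of_lt hy (by simp [hy_def]) (fun e => hwy (Subtype.ext e)) hwC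
    by_cases hvy : v = y
    · exact Or.inr (hvy ▸ hyS)
    · exact Or.inl ⟨fun n hn => (h.apply_of_ne (by omega)).symm.trans (hwC n hn), hvy⟩

theorem mem_tailClass_of_adj {u : Cof ξ} {r : ℕ} (hu : ActiveAt u.1 r) {x y : Cof ξ}
    (hy : y ∈ bStar (cofMult d m ω ξ) u) (hx : x ∉ bStar (cofMult d m ω ξ) u)
    (hxy : Adj (cofMult d m ω ξ) x y) : x ∈ tailClass r y := by
  have hyu := (mem_bStar_cofMult_iff hω hu y).1 hy
  obtain ⟨_ | p, h⟩ := (adj_cofMult_iff hω x y).1 hxy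
  · exact fun n hn => h.apply_of_ne (by omega)
  rcases lt_trichotomy p r with hp | rfl | hp
  · exact fun n hn => h.apply_of_ne (by omega)
  · exact (hx ((mem_bStar_cofMult_iff hω hu x).2 fun n hn =>
      (h.apply_of_ne hn).trans (hyu n hn))).elim
  · have hxr : x.1 r = 0 := (h.apply_of_ne (by omega)).trans ((hyu r (by omega)).trans hu.2)
    exact (zero_ne_neg_one (hxr.symm.trans (h.1.1 r hp))).elim

theorem sdiff_subset_of_isBranch {u : Cof ξ} {r : ℕ} (hu : ActiveAt u.1 r)
    {C : Set (Cof ξ)} (hC : IsBranch (cofMult d m ω ξ) u C) {x y : Cof ξ} (hxC : x ∈ C)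
    (hyS : y ∈ bStar (cofMult d m ω ξ) u) (hxy : Adj (cofMult d m ω ξ) x y) :
    tailClass r y \ {y} ⊆ C := by
  have hyu := (mem_bStar_cofMult_iff hω hu y).1 hyS
  have hxS : x ∉ bStar (cofMult d m ω ξ) u := Set.disjoint_left.1 hC.2.1 hxC
  have hxy' := mem_tailClass_of_adj hω hu hyS hxS hxy
  rintro w ⟨hwC, hwy⟩
  -- the complement of `tailClass r y \ {y}`, which the path below has to avoid
  let F : Set (Bd d) := {z | (∀ n, r < n → z n = y.1 n) → z = y.1}
  have hF : ∀ z ∈ F, (∀ n, r < n → z n = x.1 n) → ∀ i < r, z i = -1 := by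
    intro z hz hzx i hi
    rw [hz fun n hn => (hzx n hn).trans (hxy' n hn)]
    exact (hyu i (by omega)).trans (hu.1 i hi)
  have hxF : x.1 ∉ F := fun h => hxS (Subtype.ext (h hxy') ▸ hyS)
  have hwF : w.1 ∉ F := fun h => hwy (Subtype.ext (h hwC))
  obtain ⟨_, hpath⟩ := (reflTransGen_edgeAt_of_eq_of_lt r F
    (fun n hn => (hxy' n hn).trans (hwC n hn).symm) hF hxF hwF).exists_subtype (a := x)
    fun _ _ ⟨⟨_, _, h⟩, _⟩ ha => h.mem_Cof ha
  suffices ∀ c : Cof ξ, ReflTransGen (fun a b : Cof ξ =>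
      (∃ p ≤ r, EdgeAt p a.1 b.1) ∧ b.1 ∉ F) x c → c ∈ C from this _ hpath
  intro c hc
  induction hc with
  | refl => exact hxC
  | tail _ hbc ih =>
    obtain ⟨⟨p, -, hbc⟩, hcF⟩ := hbc
    refine (hC.2.2.2 _ ih _ ((adj_cofMult_iff hω _ _).2 ⟨p, hbc⟩)).resolve_right fun hcS =>
      hcF fun hc => congrArg Subtype.val (eq_of_mem_bStar_of_mem_tailClass hω hu hyS hcS hc)

theorem ncard_le_of_isBranch {u : Cof ξ} {r : ℕ} (hu : ActiveAt u.1 r) {C : Set (Cof ξ)}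
    (hC : IsBranch (cofMult d m ω ξ) u C) : d ^ (r + 1) - 1 ≤ C.ncard := by
  obtain ⟨x, hxC, y, hyS, hxy⟩ := hC.2.2.1
  calc d ^ (r + 1) - 1 = (tailClass r y \ {y}).ncard := by
        rw [Set.ncard_sdiff_singleton_of_mem (self_mem_tailClass r y), ncard_tailClass]
    _ ≤ C.ncard := Set.ncard_le_ncard (sdiff_subset_of_isBranch hω hu hC hxC hyS hxy) hC.1

theorem isLeast_ncard_isBranch {u : Cof ξ} {r : ℕ} (hu : ActiveAt u.1 r) :
    IsLeast (Set.ncard '' {C | IsBranch (cofMult d m ω ξ) u C}) (d ^ (r + 1) - 1) :=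
  ⟨exists_isBranch_ncard_eq hω hu, by
    rintro _ ⟨C, hC, rfl⟩
    exact ncard_le_of_isBranch hω hu hC⟩

theorem isLevel_cofMult_iff (j : ℕ) (u : Cof ξ) :
    IsLevel (cofMult d m ω ξ) d j u ↔ ActiveAt u.1 j := by
  refine ⟨fun ⟨hact, hj⟩ => ?_,
    fun h => ⟨(isActive_cofMult_iff hω u).2 ⟨j, h⟩, isLeast_ncard_isBranch hω h⟩⟩
  obtain ⟨r, hr⟩ := (isActive_cofMult_iff hω u).1 hact
  have hd : 2 < d := Fact.out
  have h := hj.unique (isLeast_ncard_isBranch hω hr)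
  have := Nat.one_le_pow (j + 1) d (by omega)
  have := Nat.one_le_pow (r + 1) d (by omega)
  have : j + 1 = r + 1 := Nat.pow_right_injective (by omega : 2 ≤ d)
    (show d ^ (j + 1) = d ^ (r + 1) by omega)
  exact Nat.succ_injective this ▸ hr

theorem isEdgeAt_cofMult_iff (p : ℕ) (x y : Cof ξ) :
    IsEdgeAt (cofMult d m ω ξ) d p x y ↔ EdgeAt p x.1 y.1 := by
  rcases p with _ | j
  · simp only [IsEdgeAt, adj_cofMult_iff hω, isBEdge_cofMult_iff hω]
    refine ⟨fun ⟨⟨p, h⟩, hb⟩ => ?_, fun h => ⟨⟨0, h⟩, fun ⟨r, h'⟩ =>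
      absurd (DiffOnlyAt.unique h h'.diffOnlyAt) (by omega)⟩⟩
    rcases p with _ | r
    exacts [h, (hb ⟨r, h⟩).elim]
  · simp only [IsEdgeAt, isBEdge_cofMult_iff hω, isLevel_cofMult_iff hω]
    refine ⟨fun ⟨⟨r, h⟩, hj⟩ => ?_, fun h => ⟨⟨j, h⟩, h.1⟩⟩
    obtain rfl := h.1.unique hj
    exact h

theorem tailRel_cofMult_iff (q : ℕ) (u v : Cof ξ) :
    TailRel (cofMult d m ω ξ) d q u v ↔ ∀ n, q ≤ n → u.1 n = v.1 n := by
  unfold TailRel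
  constructor
  · intro h
    induction h with
    | refl => exact fun _ _ => rfl
    | tail _ hbc ih =>
      obtain ⟨p, hp, hbc⟩ := hbc
      exact fun n hn =>
        (ih n hn).trans (((isEdgeAt_cofMult_iff hω p _ _).1 hbc).apply_of_ne (by omega))
  · intro h
    rcases q with _ | q
    · exact Subtype.ext (funext fun n => h n n.zero_le) ▸ .refl
    obtain ⟨_, hpath⟩ := (reflTransGen_edgeAt_of_eq_of_lt q ∅ h (by simp) (by simp)
      (by simp)).exists_subtype (a := u) fun _ _ ⟨⟨_, _, h⟩, _⟩ ha => h.mem_Cof ha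
    exact hpath.mono (fun a b ⟨⟨p, hp, h⟩, _⟩ =>
      ⟨p, by omega, (isEdgeAt_cofMult_iff hω p a b).2 h⟩) _ _

theorem isZeroAfterRun_cofMult_iff (root : Cof ξ) (p r : ℕ) :
    IsZeroAfterRun (cofMult d m ω ξ) d root p r ↔ root.1 p = 0 ∧ EndsIn d root.1 p r := by
  simp only [IsZeroAfterRun, tailRel_cofMult_iff hω, isLevel_cofMult_iff hω, EndsIn,
    ZMod.natCast_self, zero_sub]
  constructor
  · rintro ⟨hr, u, hu, hact⟩
    exact ⟨(hu p (by omega)).trans hact.2, hr, fun i hi hip => (hu i hi).trans (hact.1 i hip)⟩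
  · rintro ⟨h0, hr, hrun⟩
    refine ⟨hr, ⟨spine p root.1, mem_Cof_of_eq_of_lt root.2 p fun n hn => spine_of_lt _ hn⟩,
      fun n hn => ?_, spine_activeAt p _⟩
    rcases lt_trichotomy n p with h | rfl | h
    · simp [spine, h, hrun n hn h]
    · simp [spine, h0]
    · exact (spine_of_lt _ h).symm

end Spinal

theorem compatible_of_rooted_iso_general (d m : ℕ) (hd : 3 ≤ d)
    (ω : ℕ → ((Fin m → ZMod d) →+ ZMod d)) (hω : InOmega d m ω) (ξ η : Bd d)
    (φ : ↥(Cof ξ) ≃ ↥(Cof η)) (hiso : IsRootedIso d m ω ξ η φ) :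
    Compatible d ξ η := by
  have : Fact (2 < d) := ⟨hd⟩
  have key (p r : ℕ) : ξ p = 0 ∧ EndsIn d ξ p r ↔ η p = 0 ∧ EndsIn d η p r := by
    rw [← Spinal.isZeroAfterRun_cofMult_iff hω.1 ⟨ξ, self_mem_Cof ξ⟩,
      ← Spinal.isZeroAfterRun_cofMult_iff hω.1 ⟨η, self_mem_Cof η⟩, ← hiso.1]
    exact (MultGraph.isZeroAfterRun_map d φ (fun u v => (hiso.2 u v).symm) _ p r).symm
  have hzero (n : ℕ) : ξ n = 0 ↔ η n = 0 := by simpa [Spinal.endsIn_zero] using key n 0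
  exact ⟨hzero, fun p hp r => by simpa [hp, (hzero p).1 hp] using key p r⟩

/-- if there is an isomorphism of rooted, undirected, unlabeled graphs
`(Γ_ξ, ξ) → (Γ_η, η)`, then `ξ ∼ η`. -/
theorem compatible_of_rooted_iso (d m : ℕ) (hd : 3 ≤ d) (hm : 1 ≤ m)
    (ω : ℕ → ((Fin m → ZMod d) →+ ZMod d)) (hω : InOmega d m ω) (ξ η : Bd d)
    (φ : ↥(Cof ξ) ≃ ↥(Cof η)) (hiso : IsRootedIso d m ω ξ η φ) :
    Compatible d ξ η :=
  compatible_of_rooted_iso_general d m hd ω hω ξ η φ hiso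

end
end

section
/- Let d ≥ 2 and ξ, η ∈ X^ℕ. For every ξ' ∈ Cof(ξ): (1) φ_{ξ,η}(ξ') ∈ Cof(η) and R_{η, φ_{ξ,η}(ξ')} = R_{ξ, ξ'}; (2) φ_{η,ξ}(φ_{ξ,η}(ξ')) = ξ'. In particular, φ_{ξ,η} is a bijection from Cof(ξ) onto Cof(η) with inverse φ_{η,ξ}. -/
open MeasureTheory

noncomputable section

/-- `R_{ξ,ξ'} = min {s ≥ 0 : σ^s ξ = σ^s ξ'}` (with `R_{ξ,ξ} = 0`). -/
def Rdist {d : ℕ} (ξ ξ' : Bd d) : ℕ := sInf {s | ∀ n, s ≤ n → ξ n = ξ' n}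

open scoped Classical in
/-- The map `φ_{ξ,η}` sending `ξ ↦ η` and, for `ξ' ≠ ξ` with `R = R_{ξ,ξ'}`,
`ξ' ↦ ξ'_0 ⋯ ξ'_{R-2} τ_{R-1}(ξ'_{R-1}) η_R η_{R+1} ⋯`, where `τ_n` is the
transposition of `ξ_n` and `η_n`. -/
def phiMap (d : ℕ) (ξ η ξ' : Bd d) : Bd d :=
  if ξ' = ξ then η
  else fun n =>
    if n < Rdist ξ ξ' - 1 then ξ' n
    else if n = Rdist ξ ξ' - 1 then Equiv.swap (ξ n) (η n) (ξ' n)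
    else η n


lemma Rdist_mem {d : ℕ} {ξ ξ' : Bd d} (h : Cofinal ξ ξ') :
    ∀ n, Rdist ξ ξ' ≤ n → ξ n = ξ' n :=
  Nat.sInf_mem (s := {s | ∀ n, s ≤ n → ξ n = ξ' n}) h

lemma Rdist_pos {d : ℕ} {ξ ξ' : Bd d} (h : Cofinal ξ ξ') (hne : ξ' ≠ ξ) :
    1 ≤ Rdist ξ ξ' := by
  by_contra hlt
  push_neg at hlt
  exact hne (funext fun n => (Rdist_mem h n (by omega)).symm)

lemma Rdist_ne {d : ℕ} {ξ ξ' : Bd d} (h : Cofinal ξ ξ') (hne : ξ' ≠ ξ) :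
    ξ (Rdist ξ ξ' - 1) ≠ ξ' (Rdist ξ ξ' - 1) := by
  have hR1 := Rdist_pos h hne
  have hnotmem : Rdist ξ ξ' - 1 ∉ {s | ∀ n, s ≤ n → ξ n = ξ' n} :=
    Nat.notMem_of_lt_sInf (show Rdist ξ ξ' - 1 < Rdist ξ ξ' by omega)
  intro hEq
  apply hnotmem
  intro n hn
  rcases eq_or_lt_of_le hn with hn' | hn'
  · exact hn' ▸ hEq
  · exact Rdist_mem h n (by omega)

open scoped Classical in
lemma phiMap_key {d : ℕ} (ξ η : Bd d) : ∀ ξ' ∈ Cof ξ,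
    phiMap d ξ η ξ' ∈ Cof η ∧ Rdist η (phiMap d ξ η ξ') = Rdist ξ ξ' ∧
    phiMap d η ξ (phiMap d ξ η ξ') = ξ' := by
  intro ξ' hcof
  by_cases heq : ξ' = ξ
  · subst heq
    have h1 : phiMap d ξ' η ξ' = η := if_pos rfl
    have h0 : ∀ ζ : Bd d, Rdist ζ ζ = 0 :=
      fun ζ => Nat.sInf_eq_zero.mpr (Or.inl fun n _ => rfl)
    refine ⟨?_, ?_, ?_⟩
    · rw [h1]; exact self_mem_Cof η
    · rw [h1, h0, h0]
    · rw [h1]; exact if_pos rfl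
  · have hcof' : Cofinal ξ ξ' := hcof
    set R := Rdist ξ ξ' with hRdef
    have hR1 : 1 ≤ R := Rdist_pos hcof' heq
    have hne : ξ (R - 1) ≠ ξ' (R - 1) := Rdist_ne hcof' heq
    have hmem : ∀ n, R ≤ n → ξ n = ξ' n := Rdist_mem hcof'
    set η'' := phiMap d ξ η ξ' with hη''
    have hηn : ∀ n, η'' n = if n < R - 1 then ξ' n
        else if n = R - 1 then Equiv.swap (ξ n) (η n) (ξ' n) else η n := by
      intro n
      rw [hη'', phiMap, if_neg heq]
    have hA : ∀ n, R ≤ n → η'' n = η n := by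
      intro n hn
      rw [hηn, if_neg (by omega), if_neg (by omega)]
    have hB : η'' (R - 1) ≠ η (R - 1) := by
      rw [hηn, if_neg (by omega), if_pos rfl]
      intro hEq
      apply hne
      have := (Equiv.swap (ξ (R-1)) (η (R-1))).injective
        (hEq.trans (Equiv.swap_apply_left (ξ (R-1)) (η (R-1))).symm)
      exact this.symm
    have hC : η'' ≠ η := fun h => hB (congrFun h (R - 1))
    have hcofη : η'' ∈ Cof η := ⟨R, fun n hn => (hA n hn).symm⟩
    have hRη : Rdist η η'' = R := by
      apply le_antisymm
      · exact Nat.sInf_le (fun n hn => (hA n hn).symm)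
      · by_contra hlt
        push_neg at hlt
        have hm : ∀ n, Rdist η η'' ≤ n → η n = η'' n :=
          Rdist_mem ⟨R, fun n hn => (hA n hn).symm⟩
        exact hB (hm (R - 1) (by omega)).symm
    refine ⟨hcofη, hRη, ?_⟩
    funext n
    rw [phiMap, if_neg hC, hRη]
    by_cases h1 : n < R - 1
    · rw [if_pos h1, hηn, if_pos h1]
    · by_cases h2 : n = R - 1
      · rw [if_neg h1, if_pos h2, hηn, if_neg h1, if_pos h2,
          Equiv.swap_comm (η n) (ξ n), Equiv.swap_apply_self]
      · rw [if_neg h1, if_neg h2]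
        exact hmem n (by omega)

/-- for every `ξ' ∈ Cof(ξ)`: (1) `φ_{ξ,η}(ξ') ∈ Cof(η)` and
`R_{η, φ_{ξ,η}(ξ')} = R_{ξ, ξ'}`; (2) `φ_{η,ξ}(φ_{ξ,η}(ξ')) = ξ'`.  In particular
`φ_{ξ,η}` is a bijection from `Cof(ξ)` onto `Cof(η)` with inverse `φ_{η,ξ}`. -/
theorem phiMap_bijection (d : ℕ) (hd : 2 ≤ d) (ξ η : Bd d) :
    (∀ ξ' ∈ Cof ξ,
        phiMap d ξ η ξ' ∈ Cof η ∧
        Rdist η (phiMap d ξ η ξ') = Rdist ξ ξ' ∧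
        phiMap d η ξ (phiMap d ξ η ξ') = ξ') ∧
    Set.BijOn (phiMap d ξ η) (Cof ξ) (Cof η) ∧
    (∀ η' ∈ Cof η, phiMap d ξ η (phiMap d η ξ η') = η') := by
  have K1 := phiMap_key ξ η
  have K2 := phiMap_key η ξ
  refine ⟨K1, ⟨fun x hx => (K1 x hx).1, ?_, ?_⟩, fun η' hη' => (K2 η' hη').2.2⟩
  · intro a ha b hb hab
    have := (K1 a ha).2.2
    rw [hab, (K1 b hb).2.2] at this
    exact this.symm
  · intro η' hη'
    exact ⟨phiMap d η ξ η', (K2 η' hη').1, (K2 η' hη').2.2⟩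


end
end

section
/- Let d ≥ 3, m ≥ 1, ω ∈ Ω_{d,m}, and ξ, η ∈ X^ℕ. Then (Γ_ξ, ξ) and (Γ_η, η) are isomorphic as rooted, undirected, unlabeled graphs if and only if ξ ∼ η. -/
open MeasureTheory

noncomputable section

/-! The Schreier graph is explicit: `a` moves position `0`, and `b_ω` moves only the spinal points
`(d-1)^r 0 ⋯`, at position `r + 1`. If `ξ ∼ η`, the map exchanging the letters `ξ_n` and `η_n`
at exactly those positions `n` where the tail after `n` is spinal iff it is so for `ξ` is an
automorphism of the whole graph sending `ξ` to `η`. Conversely, being spinal (read off the loop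
weight), the level of a spinal point and agreement beyond a position can be defined recursively
from the weighted graph alone, so every isomorphism preserves them; the zeros of `ξ` and the runs
of `d-1` before them are read off from these. -/

namespace SpinalSchreier

open Function
open scoped Classical

variable {d m : ℕ}

lemma natCast_self_sub_one : (d : ZMod d) - 1 = -1 := by simp

/-- The points on which `b_ω` acts, at position `r + 1`. -/
def IsSpinalAt (u : Bd d) (r : ℕ) : Prop := (∀ i < r, u i = -1) ∧ u r = 0

def IsSpinal (u : Bd d) : Prop := ∃ r, IsSpinalAt u r

def DiffOnlyAt (u v : Bd d) (k : ℕ) : Prop := v k ≠ u k ∧ ∀ n ≠ k, v n = u n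

lemma DiffOnlyAt.ne {u v : Bd d} {k : ℕ} (h : DiffOnlyAt u v k) : u ≠ v :=
  fun huv => h.1 (huv ▸ rfl)

lemma diffOnlyAt_update {u : Bd d} {k : ℕ} {x : ZMod d} (hx : x ≠ u k) :
    DiffOnlyAt u (update u k x) k :=
  ⟨by simpa using hx, fun _ hn => update_of_ne hn _ _⟩

section

variable [Fact (1 < d)]

lemma IsSpinalAt.unique {u : Bd d} {r r' : ℕ} (h : IsSpinalAt u r) (h' : IsSpinalAt u r') :
    r = r' := by
  by_contra hne
  rcases Nat.lt_or_gt_of_ne hne with hlt | hlt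
  · exact neg_ne_zero.mpr one_ne_zero (h'.1 r hlt ▸ h.2)
  · exact neg_ne_zero.mpr one_ne_zero (h.1 r' hlt ▸ h'.2)

lemma IsSpinalAt.apply_ne_one (hd : 2 < d) {u : Bd d} {r : ℕ} (h : IsSpinalAt u r) (i : ℕ)
    (hi : i ≤ r) : u i ≠ 1 := by
  have : Fact (2 < d) := ⟨hd⟩
  rcases hi.lt_or_eq with hi | rfl
  · rw [h.1 i hi]; exact ZMod.neg_one_ne_one
  · rw [h.2]; exact zero_ne_one

end

def spineAt (r : ℕ) (x : Bd d) : Bd d := fun n => if n < r then -1 else if n = r then 0 else x n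

lemma isSpinalAt_spineAt (r : ℕ) (x : Bd d) : IsSpinalAt (spineAt r x) r :=
  ⟨fun i hi => if_pos hi, by simp [spineAt]⟩

lemma spineAt_of_lt {r n : ℕ} (x : Bd d) (h : r < n) : spineAt r x n = x n := by
  simp [spineAt, h.not_gt, h.ne']

lemma IsSpinalAt.eq_spineAt {w x : Bd d} {r : ℕ} (hw : IsSpinalAt w r)
    (h : ∀ n, r < n → w n = x n) : w = spineAt r x := by
  funext n
  rcases lt_trichotomy n r with hn | rfl | hn
  · simp [spineAt, hn, hw.1 n hn]
  · simp [spineAt, hw.2]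
  · rw [spineAt_of_lt x hn, h n hn]

lemma IsSpinalAt.of_diffOnlyAt_succ {u v : Bd d} {r : ℕ} (hu : IsSpinalAt u r)
    (h : DiffOnlyAt u v (r + 1)) : IsSpinalAt v r :=
  ⟨fun i hi => (h.2 i (by omega)).trans (hu.1 i hi), (h.2 r (by omega)).trans hu.2⟩

lemma aMap_iterate (u : Bd d) (k : ℕ) : (aMap d)^[k] u = update u 0 (u 0 + k) := by
  induction k with
  | zero => simp
  | succ k ih =>
    rw [iterate_succ_apply', ih]
    funext n
    rcases eq_or_ne n 0 with rfl | hn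
    · simp [aMap, add_assoc]
    · simp [aMap, hn]

lemma bMap_apply (ω : ℕ → ((Fin m → ZMod d) →+ ZMod d)) (b : Fin m → ZMod d) (u : Bd d)
    (n : ℕ) :
    bMap d m ω b u n = if n ≠ 0 ∧ IsSpinalAt u (n - 1) then u n + ω (n - 1) b else u n := by
  unfold bMap IsSpinalAt
  split_ifs <;> simp_all

variable {ω : ℕ → ((Fin m → ZMod d) →+ ZMod d)}

lemma bMap_of_isSpinalAt [Fact (1 < d)] {u : Bd d} {r : ℕ} (h : IsSpinalAt u r)
    (b : Fin m → ZMod d) : bMap d m ω b u = update u (r + 1) (u (r + 1) + ω r b) := by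
  funext n
  rw [bMap_apply]
  rcases eq_or_ne n (r + 1) with rfl | hn
  · rw [if_pos ⟨r.succ_ne_zero, h⟩, update_self]
    rfl
  · rw [update_of_ne hn, if_neg]
    rintro ⟨hn0, hn'⟩
    exact hn (by have := hn'.unique h; omega)

lemma bMap_of_not_isSpinal {u : Bd d} (h : ¬ IsSpinal u) (b : Fin m → ZMod d) :
    bMap d m ω b u = u := by
  funext n
  rw [bMap_apply, if_neg (fun hn => h ⟨_, hn.2⟩)]

variable (d m ω) in
def generator : {c : ZMod d // c ≠ 0} ⊕ {b : Fin m → ZMod d // b ≠ 0} → Bd d → Bd d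
  | .inl c => fun u => update u 0 (u 0 + c)
  | .inr b => bMap d m ω b

lemma genSet_eq_range [NeZero d] : genSet d m ω = Set.range (generator d m ω) := by
  ext f
  constructor
  · rintro (⟨j, hj1, hjd, rfl⟩ | ⟨b, hb, rfl⟩)
    · have hj : (j : ZMod d) ≠ 0 := by
        rw [Ne, ZMod.natCast_eq_zero_iff]
        exact fun hdvd => absurd (Nat.le_of_dvd (by omega) hdvd) (by omega)
      exact ⟨.inl ⟨j, hj⟩, funext fun u => (aMap_iterate u j).symm⟩
    · exact ⟨.inr ⟨b, hb⟩, rfl⟩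
  · rintro ⟨c | b, rfl⟩
    · have hc : c.1.val ≠ 0 := (ZMod.val_ne_zero _).mpr c.2
      refine Or.inl ⟨c.1.val, by omega, by have := ZMod.val_lt c.1; omega, ?_⟩
      funext u
      simp [generator, aMap_iterate]
    · exact Or.inr ⟨b, b.2, rfl⟩

lemma generator_injective [Fact (1 < d)] (hω : InOmega d m ω) :
    Injective (generator d m ω) := by
  have hzero : ∀ b : {b : Fin m → ZMod d // b ≠ 0}, generator d m ω (.inr b) 0 0 = 0 := by
    intro b
    have h0 : IsSpinalAt (0 : Bd d) 0 := ⟨fun i hi => absurd hi (Nat.not_lt_zero i), rfl⟩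
    simp [generator, bMap_of_isSpinalAt h0]
  rintro (c | b) (c' | b') h
  · have := congrFun (congrFun h 0) 0
    simp only [generator, update_self] at this
    exact congrArg Sum.inl (Subtype.ext (by simpa using this))
  · exact absurd ((congrFun (congrFun h 0) 0).trans (hzero b')) (by simpa [generator] using c.2)
  · exact absurd ((congrFun (congrFun h 0) 0).symm.trans (hzero b))
      (by simpa [generator] using c'.2)
  · have hω' : ∀ r, ω r b.1 = ω r b'.1 := fun r => by
      have := congrFun (congrFun h (spineAt r 0)) (r + 1)
      simpa [generator, bMap_of_isSpinalAt (isSpinalAt_spineAt r 0)] using this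
    refine congrArg Sum.inr (Subtype.ext (sub_eq_zero.mp (hω.2 0 _ fun r _ => ?_)))
    rw [map_sub, hω' r, sub_self]

lemma card_ne_and {α : Type*} [Finite α] {P : α → Prop} {a : α} (ha : P a) :
    Nat.card {x // x ≠ a ∧ P x} = Nat.card {x // P x} - 1 := by
  change Nat.card ↥{x | x ≠ a ∧ P x} = Nat.card ↥{x | P x} - 1
  rw [Nat.card_coe_set_eq, Nat.card_coe_set_eq,
    ← Set.ncard_sdiff_singleton_of_mem (s := {x | P x}) ha]
  congr 1
  ext x
  simp [and_comm]

lemma card_fiber_eq_card_ker {G H : Type*} [AddGroup G] [AddGroup H] (ψ : G →+ H)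
    {x₀ : G} {c : H} (h : ψ x₀ = c) : Nat.card {x // ψ x = c} = Nat.card ψ.ker :=
  (Nat.card_congr (Equiv.subtypeEquiv (Equiv.addRight x₀) fun x => by
    simp [AddMonoidHom.mem_ker, h])).symm

lemma card_ne_zero_update_add {G : Type*} [AddGroup G] [Finite G] (ψ : G →+ ZMod d)
    (hψ : Surjective ψ) (u v : Bd d) (k : ℕ) :
    Nat.card {x : G // x ≠ 0 ∧ update u k (u k + ψ x) = v} =
      if v = u then Nat.card ψ.ker - 1 else if DiffOnlyAt u v k then Nat.card ψ.ker else 0 := by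
  have key : ∀ x, update u k (u k + ψ x) = v ↔ ψ x = v k - u k ∧ ∀ n ≠ k, v n = u n := by
    intro x
    constructor
    · rintro rfl
      exact ⟨by simp, fun n hn => update_of_ne hn _ _⟩
    · rintro ⟨hx, hv⟩
      funext n
      rcases eq_or_ne n k with rfl | hn
      · simp [hx]
      · rw [update_of_ne hn, hv n hn]
  split_ifs with hvu hdiff
  · subst hvu
    rw [card_ne_and (P := fun x => update v k (v k + ψ x) = v) (by simp)]
    exact congrArg (· - 1) (Nat.card_congr (Equiv.subtypeEquivRight fun x => by simp [key]))
  · obtain ⟨x₀, hx₀⟩ := hψ (v k - u k)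
    rw [← card_fiber_eq_card_ker ψ hx₀]
    refine Nat.card_congr (Equiv.subtypeEquivRight fun x => ?_)
    rw [key]
    constructor
    · exact fun h => h.2.1
    · intro hx
      refine ⟨fun h0 => hdiff.1 ?_, hx, hdiff.2⟩
      rw [h0, map_zero, eq_comm, sub_eq_zero] at hx
      exact hx
  · refine Nat.card_eq_zero.mpr (Or.inl ⟨fun ⟨x, _, hx⟩ => ?_⟩)
    subst hx
    by_cases h0 : ψ x = 0
    · exact hvu (by simp [h0])
    · exact hdiff (diffOnlyAt_update (by simpa using h0))

lemma card_ne_zero_update_add_self [NeZero d] (u v : Bd d) :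
    Nat.card {c : ZMod d // c ≠ 0 ∧ update u 0 (u 0 + c) = v} =
      if DiffOnlyAt u v 0 then 1 else 0 := by
  have h := card_ne_zero_update_add (AddMonoidHom.id (ZMod d)) surjective_id u v 0
  simp only [AddMonoidHom.id_apply, AddMonoidHom.ker_id, AddSubgroup.card_bot] at h
  rw [h]
  split_ifs with h1 h2 <;> first | rfl | exact absurd h1 h2.ne.symm

variable (d m) in
def nonspinalLoops : ℕ := Nat.card (Fin m → ZMod d) - 1

section SchreierGraph

variable [Fact (1 < d)] {ω : ℕ → ((Fin m → ZMod d) →+ ZMod d)} (hω : InOmega d m ω)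
include hω

lemma mult_eq_add (u v : Bd d) :
    mult d m ω u v = Nat.card {c : ZMod d // c ≠ 0 ∧ update u 0 (u 0 + c) = v} +
      Nat.card {b : Fin m → ZMod d // b ≠ 0 ∧ bMap d m ω b u = v} := by
  have himage : {f | f ∈ genSet d m ω ∧ f u = v} =
      generator d m ω '' {x | generator d m ω x u = v} := by
    ext f
    simp only [genSet_eq_range, Set.mem_range, Set.mem_ofPred_eq, Set.mem_image]
    constructor
    · rintro ⟨⟨x, rfl⟩, h⟩
      exact ⟨x, h, rfl⟩
    · rintro ⟨x, h, rfl⟩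
      exact ⟨⟨x, rfl⟩, h⟩
  change Nat.card ↥{f | f ∈ genSet d m ω ∧ f u = v} = _
  rw [himage, Nat.card_image_of_injective (generator_injective hω)]
  change Nat.card {x // generator d m ω x u = v} = _
  rw [Nat.card_congr (Equiv.subtypeSum (p := fun x => generator d m ω x u = v)), Nat.card_sum]
  exact congrArg₂ (· + ·)
    (Nat.card_congr (Equiv.subtypeSubtypeEquivSubtypeInter (· ≠ (0 : ZMod d))
      (fun c => update u 0 (u 0 + c) = v)))
    (Nat.card_congr (Equiv.subtypeSubtypeEquivSubtypeInter (· ≠ 0) (bMap d m ω · u = v)))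

lemma mult_of_isSpinalAt {u : Bd d} {r : ℕ} (h : IsSpinalAt u r) (v : Bd d) :
    mult d m ω u v = (if DiffOnlyAt u v 0 then 1 else 0) +
      if v = u then Nat.card (ω r).ker - 1
      else if DiffOnlyAt u v (r + 1) then Nat.card (ω r).ker else 0 := by
  rw [mult_eq_add hω, card_ne_zero_update_add_self, ← card_ne_zero_update_add (ω r) (hω.1 r)]
  simp only [bMap_of_isSpinalAt h]

lemma mult_of_not_isSpinal {u : Bd d} (h : ¬ IsSpinal u) (v : Bd d) :
    mult d m ω u v = (if DiffOnlyAt u v 0 then 1 else 0) +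
      if v = u then Nat.card (Fin m → ZMod d) - 1 else 0 := by
  rw [mult_eq_add hω, card_ne_zero_update_add_self]
  simp only [bMap_of_not_isSpinal h]
  congr 1
  split_ifs with hvu
  · subst hvu
    rw [card_ne_and (P := fun _ : Fin m → ZMod d => v = v) rfl]
    exact congrArg (· - 1) (Nat.card_congr (Equiv.subtypeUnivEquiv fun _ => rfl))
  · exact Nat.card_eq_zero.mpr (Or.inl ⟨fun ⟨_, _, h⟩ => hvu h.symm⟩)

lemma mult_self_ne_iff (u : Bd d) : mult d m ω u u ≠ nonspinalLoops d m ↔ IsSpinal u := by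
  by_cases hu : IsSpinal u
  · obtain ⟨r, hr⟩ := hu
    have hker_pos : 0 < Nat.card (ω r).ker := Nat.card_pos
    have hker_lt : Nat.card (ω r).ker < Nat.card (Fin m → ZMod d) := by
      refine (AddSubgroup.card_le_card_addGroup _).lt_of_ne fun h => ?_
      obtain ⟨b, hb⟩ := hω.1 r 1
      have hb0 : ω r b = 0 :=
        (AddSubgroup.eq_top_iff' _).mp ((AddSubgroup.card_eq_iff_eq_top _).mp h) b
      exact one_ne_zero (hb.symm.trans hb0)
    simp only [mult_of_isSpinalAt hω hr, if_neg (fun h : DiffOnlyAt u u 0 => h.ne rfl), if_true]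
    exact iff_of_true (by unfold nonspinalLoops; omega) ⟨r, hr⟩
  · have h0 : ¬ DiffOnlyAt u u 0 := fun h => h.ne rfl
    simp [mult_of_not_isSpinal hω hu, h0, hu, nonspinalLoops]

lemma mult_ne_zero_iff {u v : Bd d} (huv : u ≠ v) :
    mult d m ω u v ≠ 0 ↔ DiffOnlyAt u v 0 ∨ ∃ r, IsSpinalAt u r ∧ DiffOnlyAt u v (r + 1) := by
  by_cases hu : IsSpinal u
  · obtain ⟨r, hr⟩ := hu
    have hker_pos : 0 < Nat.card (ω r).ker := Nat.card_pos
    have hlevel : (∃ r', IsSpinalAt u r' ∧ DiffOnlyAt u v (r' + 1)) ↔ DiffOnlyAt u v (r + 1) :=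
      ⟨fun ⟨r', hr', h⟩ => hr'.unique hr ▸ h, fun h => ⟨r, hr, h⟩⟩
    rw [hlevel, mult_of_isSpinalAt hω hr, if_neg (Ne.symm huv)]
    split_ifs <;> simp_all; omega
  · have hlevel : ¬ ∃ r, IsSpinalAt u r ∧ DiffOnlyAt u v (r + 1) := fun ⟨r, hr, _⟩ => hu ⟨r, hr⟩
    simp only [mult_of_not_isSpinal hω hu, if_neg (Ne.symm huv), hlevel, or_false]
    split_ifs <;> simp_all

lemma cofinal_of_mult_ne_zero {u v : Bd d} (h : mult d m ω u v ≠ 0) : Cofinal u v := by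
  rcases eq_or_ne u v with rfl | huv
  · exact ⟨0, fun _ _ => rfl⟩
  rcases (mult_ne_zero_iff hω huv).mp h with h0 | ⟨r, -, hr⟩
  · exact ⟨1, fun n hn => (h0.2 n (by omega)).symm⟩
  · exact ⟨r + 2, fun n hn => (hr.2 n (by omega)).symm⟩

lemma mult_map_eq {T : Bd d → Bd d} (hT : Injective T)
    (hspinal : ∀ u r, IsSpinalAt (T u) r ↔ IsSpinalAt u r)
    (hdiff_zero : ∀ u v, DiffOnlyAt (T u) (T v) 0 ↔ DiffOnlyAt u v 0)
    (hdiff_succ : ∀ u v r, IsSpinalAt u r →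
      (DiffOnlyAt (T u) (T v) (r + 1) ↔ DiffOnlyAt u v (r + 1)))
    (u v : Bd d) : mult d m ω (T u) (T v) = mult d m ω u v := by
  by_cases hu : IsSpinal u
  · obtain ⟨r, hr⟩ := hu
    rw [mult_of_isSpinalAt hω hr, mult_of_isSpinalAt hω ((hspinal u r).mpr hr), hT.eq_iff,
      hdiff_zero, hdiff_succ u v r hr]
  · have hTu : ¬ IsSpinal (T u) := fun ⟨r, h⟩ => hu ⟨r, (hspinal u r).mp h⟩
    rw [mult_of_not_isSpinal hω hu, mult_of_not_isSpinal hω hTu, hT.eq_iff, hdiff_zero]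

end SchreierGraph

def TailIsSpinal (u : Bd d) (n : ℕ) : Prop :=
  ∃ p, n < p ∧ u p = 0 ∧ ∀ i, n < i → i < p → u i = -1

lemma tailIsSpinal_congr {u v : Bd d} {n : ℕ} (h : ∀ i, n < i → u i = v i) :
    TailIsSpinal u n ↔ TailIsSpinal v n := by
  unfold TailIsSpinal
  refine exists_congr fun p => and_congr_right fun hp => ?_
  rw [h p hp]
  exact and_congr_right' (forall₂_congr fun i hi => by rw [h i hi])

lemma IsSpinalAt.tailIsSpinal {u : Bd d} {r i : ℕ} (h : IsSpinalAt u r) (hi : i < r) :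
    TailIsSpinal u i :=
  ⟨r, hi, h.2, fun j _ hj => h.1 j hj⟩

section Relabel

variable (σ τ : ℕ → Equiv.Perm (ZMod d))

def relabel (u : Bd d) : Bd d := fun n => if TailIsSpinal u n then σ n (u n) else τ n (u n)

def FixesSpine : Prop := ∀ n, σ n 0 = 0 ∧ σ n (-1) = -1 ∧ τ n 0 = 0

variable {σ τ}

lemma relabel_congr {u v : Bd d} {n : ℕ} (h : ∀ i, n ≤ i → u i = v i) :
    relabel σ τ u n = relabel σ τ v n := by
  simp only [relabel, tailIsSpinal_congr fun i hi => h i hi.le, h n le_rfl]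

lemma cofinal_relabel {u v : Bd d} (h : Cofinal u v) : Cofinal (relabel σ τ u) (relabel σ τ v) :=
  let ⟨N, hN⟩ := h
  ⟨N, fun _ hn => relabel_congr fun i hi => hN i (hn.trans hi)⟩

variable (hστ : FixesSpine σ τ)
include hστ

lemma FixesSpine.inv : FixesSpine (fun n => (σ n)⁻¹) (fun n => (τ n)⁻¹) := fun n => by
  simp only [Equiv.Perm.inv_eq_iff_eq]
  exact ⟨(hστ n).1.symm, (hστ n).2.1.symm, (hστ n).2.2.symm⟩

lemma relabel_eq_zero_iff (u : Bd d) (n : ℕ) : relabel σ τ u n = 0 ↔ u n = 0 := by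
  unfold relabel
  split_ifs
  · exact (σ n).injective.eq_iff' (hστ n).1
  · exact (τ n).injective.eq_iff' (hστ n).2.2

lemma relabel_eq_neg_one_iff {u : Bd d} {n : ℕ} (h : TailIsSpinal u n) :
    relabel σ τ u n = -1 ↔ u n = -1 := by
  rw [relabel, if_pos h]
  exact (σ n).injective.eq_iff' (hστ n).2.1

lemma tailIsSpinal_relabel_iff (u : Bd d) (n : ℕ) :
    TailIsSpinal (relabel σ τ u) n ↔ TailIsSpinal u n := by
  constructor
  · rintro ⟨p, hnp, hp, hrun⟩
    have hp' : u p = 0 := (relabel_eq_zero_iff hστ u p).mp hp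
    -- the run of `-1`s is recovered downwards from the zero at `p`
    have key : ∀ j i, n < i → i < p → p - i ≤ j → u i = -1 := by
      intro j
      induction j with
      | zero => intro i _ hi hj; omega
      | succ j ih =>
        intro i hni hi _
        have ht : TailIsSpinal u i :=
          ⟨p, hi, hp', fun i' hi' hi'p => ih i' (by omega) hi'p (by omega)⟩
        exact (relabel_eq_neg_one_iff hστ ht).mp (hrun i hni hi)
    exact ⟨p, hnp, hp', fun i hni hi => key _ i hni hi le_rfl⟩
  · rintro ⟨p, hnp, hp, hrun⟩
    refine ⟨p, hnp, (relabel_eq_zero_iff hστ u p).mpr hp, fun i hni hi => ?_⟩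
    have ht : TailIsSpinal u i := ⟨p, hi, hp, fun i' hi' hi'p => hrun i' (by omega) hi'p⟩
    exact (relabel_eq_neg_one_iff hστ ht).mpr (hrun i hni hi)

lemma relabel_inv_relabel (u : Bd d) :
    relabel (fun n => (σ n)⁻¹) (fun n => (τ n)⁻¹) (relabel σ τ u) = u := by
  funext n
  simp only [relabel, tailIsSpinal_relabel_iff hστ]
  split_ifs <;> simp

def relabelEquiv : Bd d ≃ Bd d where
  toFun := relabel σ τ
  invFun := relabel (fun n => (σ n)⁻¹) (fun n => (τ n)⁻¹)
  left_inv := relabel_inv_relabel hστ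
  right_inv u := by simpa using relabel_inv_relabel hστ.inv u

lemma isSpinalAt_relabel_iff (u : Bd d) (r : ℕ) :
    IsSpinalAt (relabel σ τ u) r ↔ IsSpinalAt u r := by
  constructor
  · intro h
    have hr : u r = 0 := (relabel_eq_zero_iff hστ u r).mp h.2
    refine ⟨fun i hi => ?_, hr⟩
    have ht : TailIsSpinal u i := ⟨r, hi, hr, fun j _ hj => ?_⟩
    · exact (relabel_eq_neg_one_iff hστ ht).mp (h.1 i hi)
    · exact (relabel_eq_neg_one_iff hστ ((tailIsSpinal_relabel_iff hστ u j).mp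
        (h.tailIsSpinal hj))).mp (h.1 j hj)
  · intro h
    exact ⟨fun i hi => (relabel_eq_neg_one_iff hστ (h.tailIsSpinal hi)).mpr (h.1 i hi),
      (relabel_eq_zero_iff hστ u r).mpr h.2⟩

lemma DiffOnlyAt.relabel {u v : Bd d} {k : ℕ} (h : DiffOnlyAt u v k)
    (hk : k = 0 ∨ ∃ r, IsSpinalAt u r ∧ k = r + 1) :
    DiffOnlyAt (relabel σ τ u) (relabel σ τ v) k := by
  have htail : TailIsSpinal v k ↔ TailIsSpinal u k := tailIsSpinal_congr fun i hi => h.2 i hi.ne'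
  refine ⟨?_, fun n hn => ?_⟩
  · unfold SpinalSchreier.relabel
    rw [htail]
    split_ifs
    · exact fun e => h.1 ((σ k).injective e)
    · exact fun e => h.1 ((τ k).injective e)
  rcases Nat.lt_or_gt_of_ne hn with hlt | hgt
  · -- positions `n ≤ r` lie on the common spine of `u` and `v`
    obtain ⟨r, hr, rfl⟩ := hk.resolve_left (by omega)
    have hv : IsSpinalAt v r := hr.of_diffOnlyAt_succ h
    rcases (Nat.lt_succ_iff.mp hlt).lt_or_eq with hnr | rfl
    · rw [SpinalSchreier.relabel, SpinalSchreier.relabel, if_pos (hv.tailIsSpinal hnr),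
        if_pos (hr.tailIsSpinal hnr), h.2 n hn]
    · rw [(relabel_eq_zero_iff hστ v n).mpr hv.2, (relabel_eq_zero_iff hστ u n).mpr hr.2]
  · exact relabel_congr fun i hi => h.2 i (by omega)

/-- A letter is relabelled according to its value and to the spinality of the tail after it, both
of which are preserved; hence so are the levels and the positions the generators act on. -/
lemma mult_relabel {ω : ℕ → ((Fin m → ZMod d) →+ ZMod d)} [Fact (1 < d)] (hω : InOmega d m ω)
    (u v : Bd d) : mult d m ω (relabel σ τ u) (relabel σ τ v) = mult d m ω u v := by
  have hinv : ∀ u, relabel (fun n => (σ n)⁻¹) (fun n => (τ n)⁻¹) (relabel σ τ u) = u :=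
    relabel_inv_relabel hστ
  refine mult_map_eq hω (T := relabel σ τ) (relabelEquiv hστ).injective (isSpinalAt_relabel_iff hστ)
    (fun u v => ⟨fun h => ?_, fun h => h.relabel hστ (Or.inl rfl)⟩)
    (fun u v r hr => ⟨fun h => ?_, fun h => h.relabel hστ (Or.inr ⟨r, hr, rfl⟩)⟩) u v
  · simpa only [hinv] using h.relabel hστ.inv (Or.inl rfl)
  · simpa only [hinv] using
      h.relabel hστ.inv (Or.inr ⟨r, (isSpinalAt_relabel_iff hστ u r).mpr hr, rfl⟩)

end Relabel

lemma swap_apply_self_of_iff {α : Type*} [DecidableEq α] {a b x : α} (h : a = x ↔ b = x) :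
    Equiv.swap a b x = x := by
  by_cases ha : a = x
  · subst ha
    rw [← h.mp rfl, Equiv.swap_self, Equiv.refl_apply]
  · exact Equiv.swap_apply_of_ne_of_ne (Ne.symm ha) (Ne.symm (h.not.mp ha))

section Compatible

variable {ξ η : Bd d} (hc : Compatible d ξ η)
include hc

lemma _root_.Compatible.symm : Compatible d η ξ :=
  ⟨fun n => (hc.1 n).symm, fun p hp r => (hc.2 p ((hc.1 p).mpr hp) r).symm⟩

lemma _root_.Compatible.endsIn {p r : ℕ} (hp : ξ p = 0) (hr : r ≤ p)
    (h : ∀ i, p - r ≤ i → i < p → ξ i = -1) : η p = 0 ∧ ∀ i, p - r ≤ i → i < p → η i = -1 := by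
  have := (hc.2 p hp r).mp ⟨hr, by simpa only [natCast_self_sub_one] using h⟩
  exact ⟨(hc.1 p).mp hp, by simpa only [EndsIn, natCast_self_sub_one] using this.2⟩

lemma _root_.Compatible.tailIsSpinal {n : ℕ} (h : TailIsSpinal ξ n) : TailIsSpinal η n := by
  obtain ⟨p, hnp, hp, hrun⟩ := h
  obtain ⟨hp', hrun'⟩ := hc.endsIn hp (r := p - n - 1) (by omega)
    fun i hi hip => hrun i (by omega) hip
  exact ⟨p, hnp, hp', fun i hi hip => hrun' i (by omega) hip⟩

lemma _root_.Compatible.eq_neg_one {n : ℕ} (h : TailIsSpinal ξ n) (hn : ξ n = -1) : η n = -1 := by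
  obtain ⟨p, hnp, hp, hrun⟩ := h
  refine (hc.endsIn hp (r := p - n) (by omega) fun i hi hip => ?_).2 n (by omega) hnp
  rcases (show n ≤ i by omega).lt_or_eq with hni | rfl
  · exact hrun i hni hip
  · exact hn

/-- On the letters of `ξ`, relabelling by these permutations is exactly `ξ ↦ η`. -/
def compatPerm (ξ η : Bd d) (onTail : Prop) (n : ℕ) : Equiv.Perm (ZMod d) :=
  if TailIsSpinal ξ n ↔ onTail then Equiv.swap (ξ n) (η n) else 1

omit hc in
lemma relabel_compatPerm_self : relabel (compatPerm ξ η True) (compatPerm ξ η False) ξ = η := by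
  funext n
  by_cases h : TailIsSpinal ξ n <;> simp [relabel, compatPerm, h]

lemma fixesSpine_compatPerm : FixesSpine (compatPerm ξ η True) (compatPerm ξ η False) := by
  have hzero : ∀ n, Equiv.swap (ξ n) (η n) 0 = 0 := fun n => swap_apply_self_of_iff (hc.1 n)
  intro n
  unfold compatPerm
  refine ⟨?_, ?_, ?_⟩ <;> split_ifs with h
  · exact hzero n
  · rfl
  · have h : TailIsSpinal ξ n := h.mpr trivial
    exact swap_apply_self_of_iff ⟨hc.eq_neg_one h, hc.symm.eq_neg_one (hc.tailIsSpinal h)⟩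
  · rfl
  · exact hzero n
  · rfl

theorem exists_isRootedIso_of_compatible {ω : ℕ → ((Fin m → ZMod d) →+ ZMod d)} [Fact (1 < d)]
    (hω : InOmega d m ω) : ∃ φ : ↥(Cof ξ) ≃ ↥(Cof η), IsRootedIso d m ω ξ η φ := by
  set T := relabelEquiv (fixesSpine_compatPerm hc)
  have hTξ : T ξ = η := relabel_compatPerm_self
  have hmem : ∀ u, u ∈ Cof ξ ↔ T u ∈ Cof η := fun u => by
    refine ⟨fun h => hTξ ▸ cofinal_relabel h, fun h => ?_⟩
    have h' : Cofinal (T.symm η) (T.symm (T u)) := cofinal_relabel h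
    rwa [T.symm_apply_apply, T.symm_apply_eq.mpr hTξ.symm] at h'
  exact ⟨T.subtypeEquiv hmem, Subtype.ext hTξ,
    fun u v => (mult_relabel (fixesSpine_compatPerm hc) hω u v).symm⟩

end Compatible

section WeightedGraph

/-! On the Schreier graph, with `c = |B| - 1`: a vertex `u` has `G u u ≠ c` iff it is spinal,
the spinal edges are the edges of the `b_ω` between points of a common level, `LevelLT G c k u`
says that `u` is spinal of level `< k`, and `Linked G c (LevelLT G c k)` is agreement beyond
position `k`. -/

variable {V W : Type*} (G : V → V → ℕ) (c : ℕ)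

def IsSpinalEdge (u v : V) : Prop :=
  u ≠ v ∧ G u u ≠ c ∧ G v v ≠ c ∧ G u v ≠ 0 ∧
    ∀ w, G u w ≠ 0 → G v w ≠ 0 → w ≠ u → w ≠ v → G w w ≠ c

def Linked (P : V → Prop) : V → V → Prop :=
  Relation.EqvGen fun x y => G x y ≠ 0 ∧ (IsSpinalEdge G c x y → P x)

def IsCrowded (P : V → Prop) (v : V) : Prop :=
  ∃ w, Linked G c P v w ∧ G w w ≠ c ∧ ¬ P w ∧
    ∃ w', Linked G c P v w' ∧ G w' w' ≠ c ∧ ¬ P w' ∧ w ≠ w'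

def LevelLT : ℕ → V → Prop
  | 0 => fun _ => False
  | k + 1 => fun u => LevelLT k u ∨
      G u u ≠ c ∧ ∃ v, (v = u ∨ IsSpinalEdge G c u v) ∧ ¬ IsCrowded G c (LevelLT k) v

/-- `f` identifies `G` with a union of connected components of `H`. -/
structure IsComponentEmbedding (H : W → W → ℕ) (f : V → W) : Prop where
  injective : Injective f
  map_weight : ∀ u v, H (f u) (f v) = G u v
  mem_range_iff : ∀ x y, H x y ≠ 0 → (x ∈ Set.range f ↔ y ∈ Set.range f)

namespace IsComponentEmbedding

variable {G c} {H : W → W → ℕ} {f : V → W} (hf : IsComponentEmbedding G H f)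
include hf

lemma forall_weight_ne_zero_iff {u : V} {R : W → Prop} :
    (∀ w, H (f u) w ≠ 0 → R w) ↔ ∀ v, G u v ≠ 0 → R (f v) := by
  refine ⟨fun h v hv => h _ (by rwa [hf.map_weight]), fun h w hw => ?_⟩
  obtain ⟨v, rfl⟩ := (hf.mem_range_iff _ _ hw).mp ⟨u, rfl⟩
  exact h v (by rwa [← hf.map_weight])

lemma isSpinalEdge_iff {u v : V} : IsSpinalEdge H c (f u) (f v) ↔ IsSpinalEdge G c u v := by
  simp only [IsSpinalEdge, hf.forall_weight_ne_zero_iff, hf.map_weight, hf.injective.ne_iff]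

lemma mem_range_iff_of_linked {Q : W → Prop} {a b : W} (h : Linked H c Q a b) :
    a ∈ Set.range f ↔ b ∈ Set.range f := by
  induction h with
  | rel a b hab => exact hf.mem_range_iff a b hab.1
  | refl => rfl
  | symm _ _ _ ih => exact ih.symm
  | trans _ _ _ _ _ ih₁ ih₂ => exact ih₁.trans ih₂

variable {P : V → Prop} {Q : W → Prop} (hPQ : ∀ u, Q (f u) ↔ P u)
include hPQ

lemma linked_iff {x y : V} : Linked H c Q (f x) (f y) ↔ Linked G c P x y := by
  constructor
  · suffices ∀ a b, Linked H c Q a b → ∀ x y, f x = a → f y = b → Linked G c P x y from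
      fun h => this _ _ h x y rfl rfl
    intro a b h
    induction h with
    | rel a b hab =>
      rintro x y rfl rfl
      exact .rel _ _ ⟨hf.map_weight x y ▸ hab.1, fun he => (hPQ x).mp
        (hab.2 (hf.isSpinalEdge_iff.mpr he))⟩
    | refl a =>
      rintro x y rfl hxy
      exact hf.injective hxy ▸ .refl _
    | symm a b _ ih => exact fun x y hx hy => .symm _ _ (ih y x hy hx)
    | trans a b e hab _ ih₁ ih₂ =>
      rintro x y rfl rfl
      obtain ⟨z, rfl⟩ := (hf.mem_range_iff_of_linked hab).mp ⟨x, rfl⟩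
      exact .trans _ _ _ (ih₁ x z rfl rfl) (ih₂ z y rfl rfl)
  · intro h
    induction h with
    | rel x y hxy =>
      exact .rel _ _ ⟨(hf.map_weight x y).symm ▸ hxy.1, fun he => (hPQ x).mpr
        (hxy.2 (hf.isSpinalEdge_iff.mp he))⟩
    | refl => exact .refl _
    | symm _ _ _ ih => exact .symm _ _ ih
    | trans _ _ _ _ _ ih₁ ih₂ => exact .trans _ _ _ ih₁ ih₂

lemma exists_linked_iff {v : V} {R : W → Prop} :
    (∃ w, Linked H c Q (f v) w ∧ R w) ↔ ∃ x, Linked G c P v x ∧ R (f x) := by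
  constructor
  · rintro ⟨w, hw, hR⟩
    obtain ⟨x, rfl⟩ := (hf.mem_range_iff_of_linked hw).mp ⟨v, rfl⟩
    exact ⟨x, (hf.linked_iff hPQ).mp hw, hR⟩
  · rintro ⟨x, hx, hR⟩
    exact ⟨f x, (hf.linked_iff hPQ).mpr hx, hR⟩

lemma isCrowded_iff {v : V} : IsCrowded H c Q (f v) ↔ IsCrowded G c P v := by
  simp only [IsCrowded, hf.exists_linked_iff hPQ, hf.map_weight, hPQ, hf.injective.ne_iff]

omit hPQ in
lemma levelLT_iff (k : ℕ) (u : V) : LevelLT H c k (f u) ↔ LevelLT G c k u := by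
  induction k generalizing u with
  | zero => rfl
  | succ k ih =>
    have hnbr : ∀ {R : W → Prop}, (∃ w, (w = f u ∨ IsSpinalEdge H c (f u) w) ∧ R w) ↔
        ∃ x, (x = u ∨ IsSpinalEdge G c u x) ∧ R (f x) := by
      intro R
      constructor
      · rintro ⟨w, hw, hR⟩
        obtain ⟨x, rfl⟩ : w ∈ Set.range f := by
          rcases hw with rfl | hw
          · exact ⟨u, rfl⟩
          · exact (hf.mem_range_iff _ _ hw.2.2.2.1).mp ⟨u, rfl⟩
        exact ⟨x, by simpa only [hf.injective.eq_iff, hf.isSpinalEdge_iff] using hw, hR⟩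
      · rintro ⟨x, hx, hR⟩
        exact ⟨f x, by simpa only [hf.injective.eq_iff, hf.isSpinalEdge_iff] using hx, hR⟩
    simp only [LevelLT, ih, hf.map_weight, hnbr, hf.isCrowded_iff ih]

end IsComponentEmbedding

end WeightedGraph

lemma IsSpinalAt.tailIsSpinal_of_eq {w v : Bd d} {ℓ s : ℕ} (hw : IsSpinalAt w ℓ) (hsℓ : s < ℓ)
    (h : ∀ n, s < n → w n = v n) : TailIsSpinal v s :=
  ⟨ℓ, hsℓ, h ℓ hsℓ ▸ hw.2, fun i hi hiℓ => h i hi ▸ hw.1 i hiℓ⟩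

lemma not_tailIsSpinal_of_eq_one (hd : 2 < d) {v : Bd d} {n : ℕ} (h : v (n + 1) = 1) :
    ¬ TailIsSpinal v n := by
  have : Fact (1 < d) := ⟨by omega⟩
  have : Fact (2 < d) := ⟨hd⟩
  rintro ⟨p, hnp, hp, hrun⟩
  rcases (Nat.succ_le_of_lt hnp).lt_or_eq with hlt | rfl
  · exact ZMod.neg_one_ne_one ((hrun _ (by omega) hlt).symm.trans h)
  · exact zero_ne_one (hp.symm.trans h)

section Semantics

variable [Fact (1 < d)] {ω : ℕ → ((Fin m → ZMod d) →+ ZMod d)} (hω : InOmega d m ω) (hd : 2 < d)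
include hω hd

lemma isSpinalEdge_mult_iff {u v : Bd d} :
    IsSpinalEdge (mult d m ω) (nonspinalLoops d m) u v ↔
      ∃ r, IsSpinalAt u r ∧ IsSpinalAt v r ∧ DiffOnlyAt u v (r + 1) := by
  simp only [IsSpinalEdge, mult_self_ne_iff hω]
  constructor
  · rintro ⟨huv, ⟨ru, hru⟩, ⟨rv, hrv⟩, hne, hcommon⟩
    rcases (mult_ne_zero_iff hω huv).mp hne with h0 | ⟨r, hr, h⟩
    · -- two spinal points joined by an `a`-edge have a common non-spinal neighbour
      exfalso
      have hwu : DiffOnlyAt u (update u 0 1) 0 :=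
        diffOnlyAt_update (Ne.symm (hru.apply_ne_one hd 0 (Nat.zero_le _)))
      have hwv : DiffOnlyAt v (update u 0 1) 0 :=
        ⟨by simpa using Ne.symm (hrv.apply_ne_one hd 0 (Nat.zero_le _)),
          fun n hn => (update_of_ne hn _ _).trans (h0.2 n hn).symm⟩
      obtain ⟨r, hr⟩ := hcommon _ ((mult_ne_zero_iff hω hwu.ne).mpr (Or.inl hwu))
        ((mult_ne_zero_iff hω hwv.ne).mpr (Or.inl hwv)) hwu.ne.symm hwv.ne.symm
      exact hr.apply_ne_one hd 0 (Nat.zero_le _) (by simp)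
    · exact ⟨r, hr, hr.of_diffOnlyAt_succ h, h⟩
  · rintro ⟨r, hu, hv, h⟩
    refine ⟨h.ne, ⟨r, hu⟩, ⟨r, hv⟩, (mult_ne_zero_iff hω h.ne).mpr (Or.inr ⟨r, hu, h⟩),
      fun w huw hvw hwu hwv => ?_⟩
    rcases (mult_ne_zero_iff hω (Ne.symm hwu)).mp huw with h0 | ⟨r', hr', h'⟩
    · exfalso
      rcases (mult_ne_zero_iff hω (Ne.symm hwv)).mp hvw with h0' | ⟨r', hr', h'⟩
      · exact h.1 ((h0'.2 _ r.succ_ne_zero).symm.trans (h0.2 _ r.succ_ne_zero))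
      · obtain rfl := hr'.unique hv
        exact h0.1 ((h'.2 0 (by omega)).trans ((h.2 0 (by omega))))
    · obtain rfl := hr'.unique hu
      exact ⟨r', hu.of_diffOnlyAt_succ h'⟩

lemma linked_mult_update_zero {P : Bd d → Prop} (x : Bd d) (z : ZMod d) :
    Linked (mult d m ω) (nonspinalLoops d m) P x (update x 0 z) := by
  by_cases hz : z = x 0
  · rw [hz, update_eq_self]; exact .refl _
  have h := diffOnlyAt_update hz
  refine .rel _ _ ⟨(mult_ne_zero_iff hω h.ne).mpr (Or.inl h), fun he => ?_⟩
  obtain ⟨r, -, -, hr⟩ := (isSpinalEdge_mult_iff hω hd).mp he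
  exact absurd (update_of_ne r.succ_ne_zero _ _) hr.1

omit hd in
lemma linked_mult_update_succ {P : Bd d → Prop} {x : Bd d} {r : ℕ} (hx : IsSpinalAt x r)
    (hP : P x) (z : ZMod d) :
    Linked (mult d m ω) (nonspinalLoops d m) P x (update x (r + 1) z) := by
  by_cases hz : z = x (r + 1)
  · rw [hz, update_eq_self]; exact .refl _
  have h := diffOnlyAt_update hz
  exact .rel _ _ ⟨(mult_ne_zero_iff hω h.ne).mpr (Or.inr ⟨r, hx, h⟩), fun _ => hP⟩

lemma linked_mult_of_eq {P : Bd d → Prop} {s : ℕ} (hP : ∀ x r, r < s → IsSpinalAt x r → P x)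
    {x y : Bd d} (h : ∀ n, s < n → x n = y n) :
    Linked (mult d m ω) (nonspinalLoops d m) P x y := by
  induction s generalizing x y with
  | zero =>
    convert linked_mult_update_zero hω hd x (y 0)
    funext n
    rcases eq_or_ne n 0 with rfl | hn
    · simp
    · rw [update_of_ne hn, h n (by omega)]
  | succ s ih =>
    -- pass through the spinal point of level `s` above `x`, where `b_ω` moves position `s + 1`
    have hP' : ∀ x r, r < s → IsSpinalAt x r → P x := fun x r hr => hP x r (by omega)
    have hx : ∀ n, s < n → x n = spineAt s x n := fun n hn => (spineAt_of_lt x hn).symm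
    refine .trans _ _ _ (ih hP' hx) (.trans _ _ _
      (linked_mult_update_succ hω (isSpinalAt_spineAt s x) (hP _ s (by omega)
        (isSpinalAt_spineAt s x)) (y (s + 1))) (ih hP' fun n hn => ?_))
    rcases eq_or_ne n (s + 1) with rfl | hn'
    · simp
    · rw [update_of_ne hn', spineAt_of_lt x hn, h n (by omega)]

lemma linked_mult_iff {P : Bd d → Prop} {s : ℕ} (hP : ∀ x, P x ↔ ∃ r < s, IsSpinalAt x r)
    {x y : Bd d} :
    Linked (mult d m ω) (nonspinalLoops d m) P x y ↔ ∀ n, s < n → x n = y n := by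
  refine ⟨fun h => ?_, linked_mult_of_eq hω hd fun x r hr hx => (hP x).mpr ⟨r, hr, hx⟩⟩
  have hequiv : Equivalence fun x y : Bd d => ∀ n, s < n → x n = y n :=
    ⟨fun _ _ _ => rfl, fun h n hn => (h n hn).symm, fun h h' n hn => (h n hn).trans (h' n hn)⟩
  refine hequiv.eqvGen_iff.mp (Relation.EqvGen.mono (fun x y ⟨hxy, hedge⟩ => ?_) _ _ h)
  rcases eq_or_ne x y with rfl | hne
  · exact fun _ _ => rfl
  rcases (mult_ne_zero_iff hω hne).mp hxy with h0 | ⟨r, hr, h⟩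
  · exact fun n hn => (h0.2 n (by omega)).symm
  · obtain ⟨r', hr', hx⟩ := (hP x).mp (hedge ((isSpinalEdge_mult_iff hω hd).mpr
      ⟨r, hr, hr.of_diffOnlyAt_succ h, h⟩))
    obtain rfl := hx.unique hr
    exact fun n hn => (h.2 n (by omega)).symm

lemma isCrowded_mult_iff {P : Bd d → Prop} {s : ℕ} (hP : ∀ x, P x ↔ ∃ r < s, IsSpinalAt x r)
    {v : Bd d} : IsCrowded (mult d m ω) (nonspinalLoops d m) P v ↔ TailIsSpinal v s := by
  simp only [IsCrowded, linked_mult_iff hω hd hP, mult_self_ne_iff hω, hP, not_exists, not_and]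
  constructor
  · rintro ⟨w, hw, ⟨ℓ, hℓ⟩, hwP, w', hw', ⟨ℓ', hℓ'⟩, hw'P, hne⟩
    by_contra ht
    have hunique : ∀ {w : Bd d} {ℓ : ℕ}, (∀ n, s < n → v n = w n) → IsSpinalAt w ℓ →
        (∀ r < s, ¬ IsSpinalAt w r) → w = spineAt s v := by
      intro w ℓ hw hℓ hwP
      obtain rfl : ℓ = s := by
        by_contra hne
        rcases Nat.lt_or_gt_of_ne hne with hlt | hlt
        · exact hwP ℓ hlt hℓ
        · exact ht (hℓ.tailIsSpinal_of_eq hlt fun n hn => (hw n hn).symm)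
      exact hℓ.eq_spineAt fun n hn => (hw n hn).symm
    exact hne ((hunique hw hℓ hwP).trans (hunique hw' hℓ' hw'P).symm)
  · rintro ⟨p, hsp, hp, hrun⟩
    have hagree : ∀ n, s < n → v n = spineAt p v n := by
      intro n hn
      rcases lt_trichotomy n p with hnp | rfl | hnp
      · simp [spineAt, hnp, hrun n hn hnp]
      · simp [spineAt, hp]
      · rw [spineAt_of_lt v hnp]
    refine ⟨spineAt p v, hagree, ⟨p, isSpinalAt_spineAt p v⟩,
      fun r hr h => absurd (h.unique (isSpinalAt_spineAt p v)) (by omega),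
      spineAt s v, fun n hn => (spineAt_of_lt v hn).symm, ⟨s, isSpinalAt_spineAt s v⟩,
      fun r hr h => absurd (h.unique (isSpinalAt_spineAt s v)) (by omega), fun he => ?_⟩
    have := congrFun he s
    simp [spineAt, hsp] at this

lemma levelLT_mult_iff (k : ℕ) (u : Bd d) :
    LevelLT (mult d m ω) (nonspinalLoops d m) k u ↔ ∃ r < k, IsSpinalAt u r := by
  induction k generalizing u with
  | zero => simp [LevelLT]
  | succ k ih =>
    simp only [LevelLT, ih, mult_self_ne_iff hω, isCrowded_mult_iff hω hd ih,
      isSpinalEdge_mult_iff hω hd]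
    constructor
    · rintro (⟨r, hr, hu⟩ | ⟨⟨ℓ, hℓ⟩, v, hv, ht⟩)
      · exact ⟨r, by omega, hu⟩
      · refine ⟨ℓ, not_le.mp fun hkℓ => ht ?_, hℓ⟩
        have hvℓ : IsSpinalAt v ℓ := by
          rcases hv with rfl | ⟨r, hr, hvr, -⟩
          · exact hℓ
          · exact hr.unique hℓ ▸ hvr
        exact hvℓ.tailIsSpinal (by omega)
    · rintro ⟨r, hr, hu⟩
      rcases (Nat.lt_succ_iff.mp hr).lt_or_eq with hr | rfl
      · exact Or.inl ⟨r, hr, hu⟩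
      refine Or.inr ⟨⟨r, hu⟩, update u (r + 1) 1, ?_, not_tailIsSpinal_of_eq_one hd (by simp)⟩
      by_cases h1 : (1 : ZMod d) = u (r + 1)
      · exact Or.inl (by rw [h1, update_eq_self])
      · have h := diffOnlyAt_update h1
        exact Or.inr ⟨r, hu, hu.of_diffOnlyAt_succ h, h⟩

end Semantics

lemma _root_.Cofinal.symm {x y : Bd d} (h : Cofinal x y) : Cofinal y x :=
  let ⟨N, hN⟩ := h
  ⟨N, fun n hn => (hN n hn).symm⟩

lemma _root_.Cofinal.trans {x y z : Bd d} (h : Cofinal x y) (h' : Cofinal y z) : Cofinal x z :=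
  let ⟨N, hN⟩ := h
  let ⟨N', hN'⟩ := h'
  ⟨max N N', fun n hn => (hN n (le_of_max_le_left hn)).trans (hN' n (le_of_max_le_right hn))⟩

lemma mem_cof_iff_of_cofinal {ζ x y : Bd d} (h : Cofinal x y) : x ∈ Cof ζ ↔ y ∈ Cof ζ :=
  ⟨fun hx => Cofinal.trans hx h, fun hy => Cofinal.trans hy h.symm⟩

lemma isSpinalAt_iff_exists_lt [Fact (1 < d)] {x : Bd d} {r : ℕ} :
    IsSpinalAt x r ↔ (∃ r' < r + 1, IsSpinalAt x r') ∧ ¬ ∃ r' < r, IsSpinalAt x r' := by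
  refine ⟨fun h => ⟨⟨r, r.lt_succ_self, h⟩, fun ⟨r', hr', h'⟩ => ?_⟩, fun ⟨⟨r', hr', h⟩, hlt⟩ => ?_⟩
  · exact absurd (h'.unique h) (by omega)
  · rcases (Nat.lt_succ_iff.mp hr').lt_or_eq with hr' | rfl
    · exact absurd ⟨r', hr', h⟩ hlt
    · exact h

lemma eq_zero_iff_exists_isSpinalAt (ζ : Bd d) (p : ℕ) :
    ζ p = 0 ↔ ∃ w, (∀ n, p ≤ n → ζ n = w n) ∧ IsSpinalAt w p := by
  refine ⟨fun h => ⟨spineAt p ζ, fun n hn => ?_, isSpinalAt_spineAt p ζ⟩,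
    fun ⟨w, hw, hp⟩ => (hw p le_rfl).trans hp.2⟩
  rcases hn.lt_or_eq with hn | rfl
  · exact (spineAt_of_lt ζ hn).symm
  · simp [spineAt, h]

lemma neg_one_and_tailIsSpinal_iff (ζ : Bd d) (p : ℕ) :
    ζ p = -1 ∧ TailIsSpinal ζ p ↔ ∃ w, (∀ n, p ≤ n → ζ n = w n) ∧ ∃ ℓ, p < ℓ ∧ IsSpinalAt w ℓ := by
  constructor
  · rintro ⟨hp, ℓ, hpℓ, hℓ, hrun⟩
    refine ⟨spineAt ℓ ζ, fun n hn => ?_, ℓ, hpℓ, isSpinalAt_spineAt ℓ ζ⟩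
    rcases lt_trichotomy n ℓ with hnℓ | rfl | hnℓ
    · rcases hn.lt_or_eq with hn | rfl
      · simp [spineAt, hnℓ, hrun n hn hnℓ]
      · simp [spineAt, hnℓ, hp]
    · simp [spineAt, hℓ]
    · exact (spineAt_of_lt ζ hnℓ).symm
  · rintro ⟨w, hw, ℓ, hpℓ, hℓ⟩
    exact ⟨(hw p le_rfl).trans (hℓ.1 p hpℓ),
      hℓ.tailIsSpinal_of_eq hpℓ fun n hn => (hw n hn.le).symm⟩

lemma compatible_of_forall {ξ η : Bd d} (hzero : ∀ p, ξ p = 0 ↔ η p = 0)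
    (hrun : ∀ p, ξ p = -1 ∧ TailIsSpinal ξ p ↔ η p = -1 ∧ TailIsSpinal η p) :
    Compatible d ξ η := by
  refine ⟨hzero, fun p hp r => ?_⟩
  have hends : ∀ {ζ ζ' : Bd d}, ζ p = 0 → (∀ i, ζ i = -1 ∧ TailIsSpinal ζ i → ζ' i = -1) →
      EndsIn d ζ p r → EndsIn d ζ' p r := by
    simp only [EndsIn, natCast_self_sub_one]
    exact fun hp h ⟨hr, hends⟩ => ⟨hr, fun i hi hip => h i
      ⟨hends i hi hip, p, hip, hp, fun j hij hjp => hends j (by omega) hjp⟩⟩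
  exact ⟨hends hp fun i h => ((hrun i).mp h).1,
    hends ((hzero p).mp hp) fun i h => ((hrun i).mpr h).1⟩

section Forward

variable [Fact (1 < d)] {ω : ℕ → ((Fin m → ZMod d) →+ ZMod d)} {ξ η : Bd d}

lemma isComponentEmbedding_coe_comp (hω : InOmega d m ω) (e : ↥(Cof ξ) ≃ ↥(Cof η))
    (he : ∀ u v, mult d m ω (e u) (e v) = mult d m ω u v) :
    IsComponentEmbedding (fun u v : ↥(Cof ξ) => mult d m ω u v) (mult d m ω)
      fun u => (e u : Bd d) := by
  have hrange : Set.range (fun u => (e u : Bd d)) = Cof η := by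
    ext x
    exact ⟨fun ⟨u, hu⟩ => hu ▸ (e u).2, fun hx => ⟨e.symm ⟨x, hx⟩, by simp⟩⟩
  refine ⟨Subtype.val_injective.comp e.injective, he, fun x y hxy => ?_⟩
  rw [hrange]
  exact mem_cof_iff_of_cofinal (cofinal_of_mult_ne_zero hω hxy)

variable (hω : InOmega d m ω) (hd : 2 < d) {φ : ↥(Cof ξ) ≃ ↥(Cof η)}
  (hφ : ∀ u v : ↥(Cof ξ), mult d m ω u v = mult d m ω (φ u) (φ v))
include hω hd hφ

lemma exists_isSpinalAt_lt_iso_iff (k : ℕ) (u : ↥(Cof ξ)) :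
    (∃ r < k, IsSpinalAt (φ u : Bd d) r) ↔ ∃ r < k, IsSpinalAt (u : Bd d) r := by
  have hφ' := isComponentEmbedding_coe_comp hω φ fun u v => (hφ u v).symm
  have hid := isComponentEmbedding_coe_comp hω (Equiv.refl ↥(Cof ξ)) fun _ _ => rfl
  rw [← levelLT_mult_iff hω hd, ← levelLT_mult_iff hω hd]
  exact (hφ'.levelLT_iff k u).trans (hid.levelLT_iff k u).symm

lemma isSpinalAt_iso_iff (u : ↥(Cof ξ)) (r : ℕ) :
    IsSpinalAt (φ u : Bd d) r ↔ IsSpinalAt (u : Bd d) r := by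
  rw [isSpinalAt_iff_exists_lt, isSpinalAt_iff_exists_lt,
    exists_isSpinalAt_lt_iso_iff hω hd hφ, exists_isSpinalAt_lt_iso_iff hω hd hφ]

lemma eqFrom_iso_iff (u v : ↥(Cof ξ)) (p : ℕ) :
    (∀ n, p ≤ n → (φ u : Bd d) n = (φ v : Bd d) n) ↔ ∀ n, p ≤ n → (u : Bd d) n = (v : Bd d) n := by
  cases p with
  | zero =>
    simp only [Nat.zero_le, forall_const, ← funext_iff, ← Subtype.ext_iff, φ.injective.eq_iff]
  | succ k =>
    have hφ' := isComponentEmbedding_coe_comp hω φ fun u v => (hφ u v).symm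
    have hid := isComponentEmbedding_coe_comp hω (Equiv.refl ↥(Cof ξ)) fun _ _ => rfl
    have hlevel := levelLT_mult_iff hω hd k
    simp only [Nat.succ_le_iff]
    rw [← linked_mult_iff hω hd hlevel, ← linked_mult_iff hω hd hlevel]
    exact (hφ'.linked_iff (hφ'.levelLT_iff k)).trans (hid.linked_iff (hid.levelLT_iff k)).symm

lemma exists_eqFrom_iso_iff (hroot : φ ⟨ξ, self_mem_Cof ξ⟩ = ⟨η, self_mem_Cof η⟩)
    {Q : Bd d → Prop} (hQ : ∀ u : ↥(Cof ξ), Q (φ u) ↔ Q u) (p : ℕ) :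
    (∃ w, (∀ n, p ≤ n → ξ n = w n) ∧ Q w) ↔ ∃ w, (∀ n, p ≤ n → η n = w n) ∧ Q w := by
  have hagree := eqFrom_iso_iff hω hd hφ ⟨ξ, self_mem_Cof ξ⟩
  simp only [hroot] at hagree
  constructor
  · rintro ⟨w, hw, hQw⟩
    let u : ↥(Cof ξ) := ⟨w, p, hw⟩
    exact ⟨φ u, (hagree u p).mpr hw, (hQ u).mpr hQw⟩
  · rintro ⟨w, hw, hQw⟩
    let u : ↥(Cof ξ) := φ.symm ⟨w, p, hw⟩
    have hu : φ u = ⟨w, p, hw⟩ := φ.apply_symm_apply _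
    refine ⟨u, (hagree u p).mp (by rw [hu]; exact hw), (hQ u).mp (by rw [hu]; exact hQw)⟩

end Forward

theorem compatible_of_isRootedIso [Fact (1 < d)] {ω : ℕ → ((Fin m → ZMod d) →+ ZMod d)}
    (hω : InOmega d m ω) (hd : 2 < d) {ξ η : Bd d} {φ : ↥(Cof ξ) ≃ ↥(Cof η)}
    (hiso : IsRootedIso d m ω ξ η φ) : Compatible d ξ η := by
  obtain ⟨hroot, hφ⟩ := hiso
  refine compatible_of_forall (fun p => ?_) (fun p => ?_)
  · rw [eq_zero_iff_exists_isSpinalAt, eq_zero_iff_exists_isSpinalAt]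
    exact exists_eqFrom_iso_iff hω hd hφ hroot (fun u => isSpinalAt_iso_iff hω hd hφ u p) p
  · rw [neg_one_and_tailIsSpinal_iff, neg_one_and_tailIsSpinal_iff]
    exact exists_eqFrom_iso_iff hω hd hφ hroot
      (fun u => exists_congr fun ℓ => and_congr_right fun _ => isSpinalAt_iso_iff hω hd hφ u ℓ) p

end SpinalSchreier

theorem rooted_iso_iff_compatible_general (d m : ℕ) (hd : 3 ≤ d)
    (ω : ℕ → ((Fin m → ZMod d) →+ ZMod d)) (hω : InOmega d m ω) (ξ η : Bd d) :
    (∃ φ : ↥(Cof ξ) ≃ ↥(Cof η), IsRootedIso d m ω ξ η φ) ↔ Compatible d ξ η := by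
  have : Fact (1 < d) := ⟨by omega⟩
  exact ⟨fun ⟨_, hiso⟩ => SpinalSchreier.compatible_of_isRootedIso hω hd hiso,
    fun hc => SpinalSchreier.exists_isRootedIso_of_compatible hc hω⟩

/-- `(Γ_ξ, ξ)` and `(Γ_η, η)` are isomorphic as rooted, undirected,
unlabeled graphs iff `ξ ∼ η`. -/
theorem rooted_iso_iff_compatible (d m : ℕ) (hd : 3 ≤ d) (hm : 1 ≤ m)
    (ω : ℕ → ((Fin m → ZMod d) →+ ZMod d)) (hω : InOmega d m ω) (ξ η : Bd d) :
    (∃ φ : ↥(Cof ξ) ≃ ↥(Cof η), IsRootedIso d m ω ξ η φ) ↔ Compatible d ξ η :=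
  rooted_iso_iff_compatible_general d m hd ω hω ξ η

end
end
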